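/- arXiv:2309.11366 — 11 statements merged into one kernel-verified Lean document; each statement's English description precedes it below -/
import Mathlib

section
/- Let G be a finite simple graph and let S, T ⊆ V(G) be disjoint sets with no edge between a vertex of S and a vertex of T, such that at least one restricted (S,T)-separator exists. Then there exist minimum-size restricted (S,T)-separators P⁻ (closest) and P⁺ (farthest) such that every minimum-size restricted (S,T)-separator P satisfies R_G(S,P⁻) ⊆ R_G(S,P) ⊆ R_G(S,P⁺). -/
open SimpleGraph

/-- `u` can reach `v` in `G` by a walk whose support stays inside `A`. -/
def ReachIn {V : Type} (G : SimpleGraph V) (A : Set V) (u v : V) : Prop :=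
  ∃ w : G.Walk u v, ∀ x ∈ w.support, x ∈ A

/-- The set of vertices reachable in `G − P` from a vertex of `S \ P`. -/
def reachSet {V : Type} (G : SimpleGraph V) (S P : Set V) : Set V :=
  {v | ∃ s ∈ S \ P, ReachIn G Pᶜ s v}

/-- `P` is an unrestricted `(S,T)`-separator: no vertex of `S \ P` reaches a
vertex of `T \ P` in `G − P`. -/
def IsSep {V : Type} (G : SimpleGraph V) (S T P : Set V) : Prop :=
  ∀ s ∈ S \ P, ∀ t ∈ T \ P, ¬ ReachIn G Pᶜ s t

/-- A restricted `(S,T)`-separator additionally avoids `S ∪ T`. -/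
def IsRestrictedSep {V : Type} (G : SimpleGraph V) (S T P : Set V) : Prop :=
  IsSep G S T P ∧ P ∩ (S ∪ T) = ∅

/-- A minimum-size restricted `(S,T)`-separator. -/
def IsMinRestrictedSep {V : Type} (G : SimpleGraph V) (S T P : Set V) : Prop :=
  IsRestrictedSep G S T P ∧ ∀ Q : Set V, IsRestrictedSep G S T Q → P.ncard ≤ Q.ncard

/-!
Uncrossing. Write `∂A` (`outerBoundary G A`) for the set of vertices outside `A` with a
neighbour in `A`. The reach set `X` of a restricted separator `P` contains `S`, misses `T` and has `∂X ⊆ P`; conversely `∂A`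
separates `S` from `T` whenever `S ⊆ A` and `A` misses `T`. For minimum separators `P`, `Q` with
reach sets `X`, `Y`, the separators `∂(X ∩ Y)` and `∂(X ∪ Y)` lie in `P ∪ Q`, and submodularity
`|∂(X ∩ Y)| + |∂(X ∪ Y)| ≤ |∂X| + |∂Y| ≤ |P| + |Q|` forces both to be minimum. So a minimum
separator whose reach set has the fewest (most) vertices has its reach set below (above) that of
every other minimum separator.
-/

section Uncrossing

variable {V : Type} {G : SimpleGraph V} {S T P Q A B : Set V} {u v : V}

def outerBoundary (G : SimpleGraph V) (A : Set V) : Set V :=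
  {v | v ∉ A ∧ ∃ u ∈ A, G.Adj u v}

lemma notMem_of_mem_outerBoundary (h : v ∈ outerBoundary G A) : v ∉ A := h.1

lemma outerBoundary_inter_subset :
    outerBoundary G (A ∩ B) ⊆ outerBoundary G A ∪ outerBoundary G B := by
  rintro v ⟨hv, u, hu, hadj⟩
  by_cases hvA : v ∈ A
  · exact Or.inr ⟨fun hvB => hv ⟨hvA, hvB⟩, u, hu.2, hadj⟩
  · exact Or.inl ⟨hvA, u, hu.1, hadj⟩

lemma outerBoundary_union_subset :
    outerBoundary G (A ∪ B) ⊆ outerBoundary G A ∪ outerBoundary G B := by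
  rintro v ⟨hv, u, hu | hu, hadj⟩
  · exact Or.inl ⟨fun h => hv (Or.inl h), u, hu, hadj⟩
  · exact Or.inr ⟨fun h => hv (Or.inr h), u, hu, hadj⟩

lemma outerBoundary_inter_inter_outerBoundary_union_subset :
    outerBoundary G (A ∩ B) ∩ outerBoundary G (A ∪ B) ⊆
      outerBoundary G A ∩ outerBoundary G B := by
  rintro v ⟨⟨-, u, hu, hadj⟩, hv, -⟩
  exact ⟨⟨fun h => hv (Or.inl h), u, hu.1, hadj⟩, ⟨fun h => hv (Or.inr h), u, hu.2, hadj⟩⟩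

lemma ncard_outerBoundary_inter_add_ncard_outerBoundary_union_le [Finite V] :
    (outerBoundary G (A ∩ B)).ncard + (outerBoundary G (A ∪ B)).ncard ≤
      (outerBoundary G A).ncard + (outerBoundary G B).ncard := by
  rw [← Set.ncard_union_add_ncard_inter (outerBoundary G (A ∩ B)),
    ← Set.ncard_union_add_ncard_inter (outerBoundary G A)]
  exact add_le_add
    (Set.ncard_le_ncard (Set.union_subset outerBoundary_inter_subset outerBoundary_union_subset))
    (Set.ncard_le_ncard outerBoundary_inter_inter_outerBoundary_union_subset)

lemma Walk.support_subset_of_start_mem (w : G.Walk u v) (hu : u ∈ A)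
    (hw : ∀ x ∈ w.support, x ∉ outerBoundary G A) : ∀ x ∈ w.support, x ∈ A := by
  induction w with
  | nil => simpa using hu
  | @cons a b c hadj p ih =>
    have hb : b ∈ A := by_contra fun hb => hw b (by simp) ⟨hb, a, hu, hadj⟩
    intro x hx
    rcases List.mem_cons.mp (by simpa using hx) with rfl | hx
    · exact hu
    · exact ih hb (fun y hy => hw y (by simp [hy])) x hx

lemma mem_of_reachIn_compl_outerBoundary (hu : u ∈ A)
    (h : ReachIn G (outerBoundary G A)ᶜ u v) : v ∈ A := by
  obtain ⟨w, hw⟩ := h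
  exact Walk.support_subset_of_start_mem w hu hw v w.end_mem_support

lemma isSep_outerBoundary (hSA : S ⊆ A) (hTA : Disjoint T A) :
    IsSep G S T (outerBoundary G A) := fun _ hs _ ht h =>
  hTA.notMem_of_mem_left ht.1 (mem_of_reachIn_compl_outerBoundary (hSA hs.1) h)

lemma reachSet_outerBoundary_subset (hSA : S ⊆ A) : reachSet G S (outerBoundary G A) ⊆ A :=
  fun _ ⟨_, hs, h⟩ => mem_of_reachIn_compl_outerBoundary (hSA hs.1) h

lemma mem_reachSet_of_adj (hv : v ∈ reachSet G S P) (hadj : G.Adj v u) (hu : u ∉ P) :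
    u ∈ reachSet G S P := by
  obtain ⟨s, hs, w, hw⟩ := hv
  refine ⟨s, hs, w.concat hadj, fun x hx => ?_⟩
  rw [Walk.support_concat, List.mem_append, List.mem_singleton] at hx
  rcases hx with hx | rfl
  · exact hw x hx
  · exact hu

lemma outerBoundary_reachSet_subset : outerBoundary G (reachSet G S P) ⊆ P :=
  fun _ ⟨hv, _, hu, hadj⟩ => by_contra fun hvP => hv (mem_reachSet_of_adj hu hadj hvP)

lemma reachSet_subset_reachSet_outerBoundary (h : reachSet G S P ⊆ A) :
    reachSet G S P ⊆ reachSet G S (outerBoundary G A) := by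
  classical
  rintro v ⟨s, hs, w, hw⟩
  have hA : ∀ x ∈ w.support, x ∈ A := fun x hx =>
    h ⟨s, hs, w.takeUntil x hx, fun y hy => hw y (w.support_takeUntil_subset_support hx hy)⟩
  exact ⟨s, ⟨hs.1, fun hb => notMem_of_mem_outerBoundary hb (hA s w.start_mem_support)⟩, w,
    fun x hx hb => notMem_of_mem_outerBoundary hb (hA x hx)⟩

lemma IsRestrictedSep.disjoint (hP : IsRestrictedSep G S T P) : Disjoint P (S ∪ T) :=
  Set.disjoint_iff_inter_eq_empty.mpr hP.2

lemma IsRestrictedSep.subset_reachSet (hP : IsRestrictedSep G S T P) : S ⊆ reachSet G S P :=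
  fun s hs =>
    have hsP : s ∉ P := hP.disjoint.notMem_of_mem_right (Or.inl hs)
    ⟨s, ⟨hs, hsP⟩, Walk.nil, by simpa using hsP⟩

lemma IsRestrictedSep.disjoint_reachSet (hP : IsRestrictedSep G S T P) :
    Disjoint T (reachSet G S P) :=
  Set.disjoint_left.mpr fun t ht ⟨s, hs, h⟩ =>
    hP.1 s hs t ⟨ht, hP.disjoint.notMem_of_mem_right (Or.inr ht)⟩ h

lemma isRestrictedSep_outerBoundary (hSA : S ⊆ A) (hTA : Disjoint T A)
    (hT : Disjoint (outerBoundary G A) T) : IsRestrictedSep G S T (outerBoundary G A) := by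
  refine ⟨isSep_outerBoundary hSA hTA, Set.disjoint_iff_inter_eq_empty.mp ?_⟩
  refine Set.disjoint_union_right.mpr ⟨Set.disjoint_left.mpr fun v hv hvS => ?_, hT⟩
  exact notMem_of_mem_outerBoundary hv (hSA hvS)

lemma IsMinRestrictedSep.of_ncard_le (hP : IsMinRestrictedSep G S T P)
    (hQ : IsRestrictedSep G S T Q) (h : Q.ncard ≤ P.ncard) : IsMinRestrictedSep G S T Q :=
  ⟨hQ, fun R hR => h.trans (hP.2 R hR)⟩

lemma IsMinRestrictedSep.uncross [Finite V] (hP : IsMinRestrictedSep G S T P)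
    (hQ : IsMinRestrictedSep G S T Q) :
    IsMinRestrictedSep G S T (outerBoundary G (reachSet G S P ∩ reachSet G S Q)) ∧
      IsMinRestrictedSep G S T (outerBoundary G (reachSet G S P ∪ reachSet G S Q)) := by
  set X := reachSet G S P
  set Y := reachSet G S Q
  have hbXY : outerBoundary G X ∪ outerBoundary G Y ⊆ P ∪ Q :=
    Set.union_subset_union outerBoundary_reachSet_subset outerBoundary_reachSet_subset
  have hPQT : Disjoint (P ∪ Q) T := Set.disjoint_union_left.mpr
    ⟨Set.disjoint_union_right.mp hP.1.disjoint |>.2,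
      Set.disjoint_union_right.mp hQ.1.disjoint |>.2⟩
  have hinter : IsRestrictedSep G S T (outerBoundary G (X ∩ Y)) :=
    isRestrictedSep_outerBoundary (Set.subset_inter hP.1.subset_reachSet hQ.1.subset_reachSet)
      (hP.1.disjoint_reachSet.inter_right Y)
      (hPQT.mono_left (outerBoundary_inter_subset.trans hbXY))
  have hunion : IsRestrictedSep G S T (outerBoundary G (X ∪ Y)) :=
    isRestrictedSep_outerBoundary (hP.1.subset_reachSet.trans Set.subset_union_left)
      (Set.disjoint_union_right.mpr ⟨hP.1.disjoint_reachSet, hQ.1.disjoint_reachSet⟩)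
      (hPQT.mono_left (outerBoundary_union_subset.trans hbXY))
  have hsub : (outerBoundary G (X ∩ Y)).ncard + (outerBoundary G (X ∪ Y)).ncard ≤
      P.ncard + Q.ncard :=
    ncard_outerBoundary_inter_add_ncard_outerBoundary_union_le.trans
      (add_le_add (Set.ncard_le_ncard outerBoundary_reachSet_subset)
        (Set.ncard_le_ncard outerBoundary_reachSet_subset))
  have hQP := hQ.2 P hP.1
  have hPinter := hP.2 _ hinter
  have hPunion := hP.2 _ hunion
  exact ⟨hP.of_ncard_le hinter (by omega), hP.of_ncard_le hunion (by omega)⟩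

lemma exists_isMinRestrictedSep [Finite V] (hex : ∃ P, IsRestrictedSep G S T P) :
    ∃ P, IsMinRestrictedSep G S T P := by
  obtain ⟨P, hP, hmin⟩ := Set.exists_min_image {P | IsRestrictedSep G S T P} Set.ncard
    (Set.toFinite _) hex
  exact ⟨P, hP, hmin⟩

lemma exists_isMinRestrictedSep_reachSet_subset [Finite V] (hex : ∃ P, IsRestrictedSep G S T P) :
    ∃ Pm, IsMinRestrictedSep G S T Pm ∧
      ∀ P, IsMinRestrictedSep G S T P → reachSet G S Pm ⊆ reachSet G S P := by
  obtain ⟨Pm, hPm, hmin⟩ := Set.exists_min_image {P | IsMinRestrictedSep G S T P}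
    (fun P => (reachSet G S P).ncard) (Set.toFinite _) (exists_isMinRestrictedSep hex)
  refine ⟨Pm, hPm, fun P hP => ?_⟩
  have hM := (IsMinRestrictedSep.uncross hPm hP).1
  have hMsub := reachSet_outerBoundary_subset (G := G)
    (Set.subset_inter hPm.1.subset_reachSet hP.1.subset_reachSet)
  have heq := Set.eq_of_subset_of_ncard_le (hMsub.trans Set.inter_subset_left) (hmin _ hM)
  exact heq ▸ hMsub.trans Set.inter_subset_right

lemma exists_isMinRestrictedSep_subset_reachSet [Finite V] (hex : ∃ P, IsRestrictedSep G S T P) :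
    ∃ Pp, IsMinRestrictedSep G S T Pp ∧
      ∀ P, IsMinRestrictedSep G S T P → reachSet G S P ⊆ reachSet G S Pp := by
  obtain ⟨Pp, hPp, hmax⟩ := Set.exists_max_image {P | IsMinRestrictedSep G S T P}
    (fun P => (reachSet G S P).ncard) (Set.toFinite _) (exists_isMinRestrictedSep hex)
  refine ⟨Pp, hPp, fun P hP => ?_⟩
  have hJ := (IsMinRestrictedSep.uncross hPp hP).2
  have hJsup : reachSet G S Pp ∪ reachSet G S P ⊆ _ :=
    Set.union_subset (reachSet_subset_reachSet_outerBoundary Set.subset_union_left)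
      (reachSet_subset_reachSet_outerBoundary Set.subset_union_right)
  have heq := Set.eq_of_subset_of_ncard_le (Set.subset_union_left.trans hJsup) (hmax _ hJ)
  exact heq ▸ Set.subset_union_right.trans hJsup

end Uncrossing

theorem stmt4_general {V : Type} [Fintype V] (G : SimpleGraph V) (S T : Set V)
    (hex : ∃ P : Set V, IsRestrictedSep G S T P) :
    ∃ Pm Pp : Set V, IsMinRestrictedSep G S T Pm ∧ IsMinRestrictedSep G S T Pp ∧
      ∀ P : Set V, IsMinRestrictedSep G S T P →
        reachSet G S Pm ⊆ reachSet G S P ∧ reachSet G S P ⊆ reachSet G S Pp := by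
  obtain ⟨Pm, hPm, hclosest⟩ := exists_isMinRestrictedSep_reachSet_subset hex
  obtain ⟨Pp, hPp, hfarthest⟩ := exists_isMinRestrictedSep_subset_reachSet hex
  exact ⟨Pm, Pp, hPm, hPp, fun P hP => ⟨hclosest P hP, hfarthest P hP⟩⟩

/-- Existence of the closest and farthest minimum restricted separators. -/
theorem stmt4 {V : Type} [Fintype V] (G : SimpleGraph V) (S T : Set V)
    (hdisj : Disjoint S T) (hnonadj : ∀ s ∈ S, ∀ t ∈ T, ¬ G.Adj s t)
    (hex : ∃ P : Set V, IsRestrictedSep G S T P) :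
    ∃ Pm Pp : Set V, IsMinRestrictedSep G S T Pm ∧ IsMinRestrictedSep G S T Pp ∧
      ∀ P : Set V, IsMinRestrictedSep G S T P →
        reachSet G S Pm ⊆ reachSet G S P ∧ reachSet G S P ⊆ reachSet G S Pp :=
  stmt4_general G S T hex
end

section
/- Let G be a finite simple graph, let S, T ⊆ V(G) be disjoint sets admitting a left-restricted (S,T)-separator, and let P⁺ be a farthest minimum left-restricted (S,T)-separator, i.e., a minimum-size left-restricted (S,T)-separator such that R_G(S,P) ⊆ R_G(S,P⁺) for every minimum-size left-restricted (S,T)-separator P. Then for every vertex v ∈ V(G): λ^L_G(S ∪ {v}, T) > λ^L_G(S,T) if and only if v ∈ R_G(T,P⁺) ∪ P⁺. -/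
/-!
If `v` lies in `R(T, P⁺) ∪ P⁺`, there is a walk from `v` to `T` meeting `P⁺` at most in `v`
(for `v ∈ P⁺` this is the private path that minimality of `P⁺` provides). Suppose a
left-restricted `(S ∪ {v}, T)`-separator `Q` of size `|P⁺|` existed. Then `Q` is a minimum
left-restricted `(S, T)`-separator, so `R(S, Q) ⊆ R(S, P⁺)`. Follow the walk backwards from `T`
to its first vertex `c` in `Q ∪ {v}`. If `c = v`, then `Q` does not separate `v` from `T`. If
`c ∈ Q`, then `c` is adjacent to `R(S, Q) ⊆ R(S, P⁺)` by minimality of `Q`, so `S` reaches `T`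
avoiding `P⁺`. Conversely, if `v ∉ R(T, P⁺) ∪ P⁺` then `P⁺` itself separates `S ∪ {v}` from `T`.
-/

open SimpleGraph

/-- A left-restricted `(S,T)`-separator additionally avoids `S`. -/
def IsLeftSep {V : Type} (G : SimpleGraph V) (S T P : Set V) : Prop :=
  IsSep G S T P ∧ P ∩ S = ∅

/-- A minimum-size left-restricted `(S,T)`-separator. -/
def IsMinLeftSep {V : Type} (G : SimpleGraph V) (S T P : Set V) : Prop :=
  IsLeftSep G S T P ∧ ∀ Q : Set V, IsLeftSep G S T Q → P.ncard ≤ Q.ncard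

/-- `λ^L_G(S,T)`: the minimum size of a left-restricted `(S,T)`-separator,
`⊤` (i.e. `+∞`) if none exists. -/
noncomputable def lamL {V : Type} (G : SimpleGraph V) (S T : Set V) : ℕ∞ :=
  ⨅ (P : Set V) (_ : IsLeftSep G S T P), (P.ncard : ℕ∞)

variable {V : Type} {G : SimpleGraph V}

namespace ReachIn

variable {A B C : Set V} {a b c : V}

theorem refl (ha : a ∈ A) : ReachIn G A a a :=
  ⟨Walk.nil, by simpa using ha⟩

theorem mem_left (h : ReachIn G A a b) : a ∈ A :=
  h.elim fun w hw => hw a w.start_mem_support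

theorem mem_right (h : ReachIn G A a b) : b ∈ A :=
  h.elim fun w hw => hw b w.end_mem_support

theorem mono (h : ReachIn G A a b) (hAB : A ⊆ B) : ReachIn G B a b :=
  h.elim fun w hw => ⟨w, fun x hx => hAB (hw x hx)⟩

theorem symm (h : ReachIn G A a b) : ReachIn G A b a :=
  h.elim fun w hw => ⟨w.reverse, fun x hx => hw x (by simpa using hx)⟩

theorem trans (h₁ : ReachIn G A a b) (h₂ : ReachIn G A b c) : ReachIn G A a c := by
  obtain ⟨w₁, hw₁⟩ := h₁
  obtain ⟨w₂, hw₂⟩ := h₂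
  refine ⟨w₁.append w₂, fun x hx => ?_⟩
  rcases (Walk.mem_support_append_iff w₁ w₂).mp hx with hx | hx
  exacts [hw₁ x hx, hw₂ x hx]

theorem cons (hadj : G.Adj a b) (ha : a ∈ A) (h : ReachIn G A b c) : ReachIn G A a c :=
  h.elim fun w hw => ⟨w.cons hadj, by simpa [Walk.support_cons, ha] using hw⟩

theorem of_adj (hadj : G.Adj a b) (ha : a ∈ A) (hb : b ∈ A) : ReachIn G A a b :=
  (refl hb).cons hadj ha

theorem split (h : ReachIn G A a b) (p : V) :
    ReachIn G (A \ {p}) a b ∨ ReachIn G A a p ∧ ReachIn G A p b := by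
  classical
  obtain ⟨w, hw⟩ := h
  by_cases hp : p ∈ w.support
  · exact Or.inr ⟨⟨w.takeUntil p hp, fun x hx => hw x (w.support_takeUntil_subset_support hp hx)⟩,
      ⟨w.dropUntil p hp, fun x hx => hw x (w.support_dropUntil_subset_support hp hx)⟩⟩
  · exact Or.inl ⟨w, fun x hx => ⟨hw x hx, by rintro rfl; exact hp hx⟩⟩

theorem exists_first_mem (h : ReachIn G A a b) (hb : b ∈ C) :
    ∃ c ∈ C, ReachIn G (A \ (C \ {c})) a c := by
  obtain ⟨w, hw⟩ := h
  induction w with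
  | nil => exact ⟨_, hb, refl ⟨hw _ (by simp), fun h => h.2 rfl⟩⟩
  | @cons a u b hadj w ih =>
    have ha : a ∈ A := hw a w.support.mem_cons_self
    by_cases haC : a ∈ C
    · exact ⟨a, haC, refl ⟨ha, fun h => h.2 rfl⟩⟩
    · obtain ⟨c, hc, hu⟩ := ih hb fun x hx => hw x (List.mem_cons_of_mem _ hx)
      exact ⟨c, hc, hu.cons hadj ⟨ha, fun h => haC h.1⟩⟩

theorem exists_adj_last (h : ReachIn G A a b) (hab : a ≠ b) :
    ∃ c, ReachIn G (A \ {b}) a c ∧ G.Adj c b := by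
  obtain ⟨w, hw⟩ := h
  induction w with
  | nil => exact absurd rfl hab
  | @cons a u b hadj w ih =>
    have ha : a ∈ A \ {b} := ⟨hw a w.support.mem_cons_self, hab⟩
    by_cases hub : u = b
    · subst hub
      exact ⟨a, refl ha, hadj⟩
    · obtain ⟨c, hu, hc⟩ := ih hub fun x hx => hw x (List.mem_cons_of_mem _ hx)
      exact ⟨c, hu.cons hadj ha, hc⟩

end ReachIn

variable {S T P Q : Set V} {v : V}

theorem IsLeftSep.anti_left {S' : Set V} (hS : S' ⊆ S) (h : IsLeftSep G S T P) :
    IsLeftSep G S' T P :=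
  ⟨fun s hs => h.1 s ⟨hS hs.1, hs.2⟩,
    Set.subset_empty_iff.mp (h.2 ▸ Set.inter_subset_inter_right P hS)⟩

theorem IsLeftSep.union_singleton (h : IsLeftSep G S T P) (hvP : v ∉ P)
    (hvT : v ∉ reachSet G T P) : IsLeftSep G (S ∪ {v}) T P := by
  refine ⟨?_, ?_⟩
  · rintro s ⟨hs | rfl, hsP⟩ t ht hst
    · exact h.1 s ⟨hs, hsP⟩ t ht hst
    · exact hvT ⟨t, ht, hst.symm⟩
  · rw [Set.inter_union_distrib_left, h.2, Set.empty_union]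
    exact Set.inter_singleton_eq_empty.mpr hvP

theorem lamL_le (h : IsLeftSep G S T P) : lamL G S T ≤ P.ncard :=
  iInf₂_le P h

theorem exists_isLeftSep_ncard_le {n : ℕ} (h : lamL G S T ≤ n) :
    ∃ P, IsLeftSep G S T P ∧ P.ncard ≤ n := by
  by_contra! hcon
  have : ((n + 1 : ℕ) : ℕ∞) ≤ lamL G S T := le_iInf₂ fun P hP => Nat.cast_le.mpr (hcon P hP)
  exact absurd (Nat.cast_le.mp (this.trans h)) (by omega)

namespace IsMinLeftSep

theorem lamL_eq (hP : IsMinLeftSep G S T P) : lamL G S T = P.ncard :=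
  le_antisymm (lamL_le hP.1) (le_iInf₂ fun Q hQ => Nat.cast_le.mpr (hP.2 Q hQ))

theorem of_ncard_le (hP : IsMinLeftSep G S T P) (hQ : IsLeftSep G S T Q)
    (hcard : Q.ncard ≤ P.ncard) : IsMinLeftSep G S T Q :=
  ⟨hQ, fun R hR => hcard.trans (hP.2 R hR)⟩

variable [Finite V] {p q : V}

theorem exists_reachIn_through (hP : IsMinLeftSep G S T P) (hp : p ∈ P) :
    ∃ s ∈ S, ∃ t ∈ T, ReachIn G (P \ {p})ᶜ s p ∧ ReachIn G (P \ {p})ᶜ p t := by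
  have hsep : ¬ IsSep G S T (P \ {p}) := fun h =>
    (hP.2 _ ⟨h, Set.subset_empty_iff.mp (hP.1.2 ▸ Set.inter_subset_inter_left S Set.sdiff_subset)⟩
      ).not_gt (Set.ncard_sdiff_singleton_lt_of_mem hp)
  simp only [IsSep, not_forall, not_not] at hsep
  obtain ⟨s, ⟨hs, -⟩, t, ⟨ht, -⟩, hst⟩ := hsep
  rcases hst.split p with hst' | ⟨hsp, hpt⟩
  · have hst' : ReachIn G Pᶜ s t := hst'.mono fun x hx hxP => hx.1 ⟨hxP, hx.2⟩
    exact absurd hst' (hP.1.1 s ⟨hs, fun hsP => hP.1.2.subset ⟨hsP, hs⟩⟩ t ⟨ht, hst'.mem_right⟩)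
  · exact ⟨s, hs, t, ht, hsp, hpt⟩

theorem mem_reachSet_of_reachSet_subset (hQ : IsMinLeftSep G S T Q)
    (hsub : reachSet G S Q ⊆ reachSet G S P) (hq : q ∈ Q) (hqP : q ∉ P) :
    q ∈ reachSet G S P := by
  obtain ⟨s, hs, -, -, hsq, -⟩ := hQ.exists_reachIn_through hq
  have hsQ : s ∉ Q := fun hsQ => hQ.1.2.subset ⟨hsQ, hs⟩
  obtain ⟨c, hsc, hcq⟩ := hsq.exists_adj_last (by rintro rfl; exact hsQ hq)
  have hsc : ReachIn G Qᶜ s c := hsc.mono fun x hx hxQ => hx.1 ⟨hxQ, hx.2⟩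
  obtain ⟨s', hs', hs'c⟩ := hsub ⟨s, ⟨hs, hsQ⟩, hsc⟩
  exact ⟨s', hs', hs'c.trans (.of_adj hcq hs'c.mem_right hqP)⟩

theorem not_reachIn_of_isLeftSep_union_singleton (hP : IsSep G S T P)
    (hQ : IsMinLeftSep G S T Q) (hsub : reachSet G S Q ⊆ reachSet G S P)
    (hQv : IsLeftSep G (S ∪ {v}) T Q) {t : V} (ht : t ∈ T) :
    ¬ ReachIn G (P \ {v})ᶜ v t := by
  intro hvt
  have hvQ : v ∉ Q := fun hvQ => hQv.2.subset ⟨hvQ, Or.inr rfl⟩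
  obtain ⟨c, hc, htc⟩ := hvt.symm.exists_first_mem (C := insert v Q) (Set.mem_insert v Q)
  rcases hc with rfl | hcQ
  · have htc : ReachIn G Qᶜ t c := htc.mono fun x hx hxQ =>
      hx.2 ⟨Or.inr hxQ, by rintro rfl; exact hvQ hxQ⟩
    exact hQv.1 c ⟨Or.inr rfl, hvQ⟩ t ⟨ht, htc.mem_left⟩ htc.symm
  · have hcv : c ≠ v := by rintro rfl; exact hvQ hcQ
    have htc : ReachIn G Pᶜ t c := htc.mono fun x hx hxP => by
      obtain rfl : x = v := by_contra fun hxv => hx.1 ⟨hxP, hxv⟩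
      exact hx.2 ⟨Set.mem_insert x Q, fun hxc => hcv hxc.symm⟩
    obtain ⟨s, hs, hsc⟩ := hQ.mem_reachSet_of_reachSet_subset hsub hcQ htc.mem_right
    exact hP s hs t ⟨ht, htc.mem_left⟩ (hsc.trans htc.symm)

end IsMinLeftSep

theorem stmt5_general {V : Type} [Fintype V] (G : SimpleGraph V) (S T : Set V)
    (Pp : Set V)
    (hPp : IsMinLeftSep G S T Pp)
    (hfar : ∀ P : Set V, IsMinLeftSep G S T P → reachSet G S P ⊆ reachSet G S Pp) :
    ∀ v : V, lamL G S T < lamL G (S ∪ {v}) T ↔ v ∈ reachSet G T Pp ∪ Pp := by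
  intro v
  rw [hPp.lamL_eq]
  constructor
  · intro hlt
    by_contra hv
    rw [Set.mem_union, not_or] at hv
    exact hlt.not_ge (lamL_le (hPp.1.union_singleton hv.2 hv.1))
  · intro hv
    by_contra hle
    obtain ⟨Q, hQ, hQcard⟩ := exists_isLeftSep_ncard_le (not_lt.mp hle)
    have hQmin := hPp.of_ncard_le (hQ.anti_left Set.subset_union_left) hQcard
    obtain ⟨t, ht, hvt⟩ : ∃ t ∈ T, ReachIn G (Pp \ {v})ᶜ v t := by
      rcases hv with ⟨t, ⟨ht, -⟩, htv⟩ | hvP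
      · exact ⟨t, ht, htv.symm.mono (Set.compl_subset_compl.mpr Set.sdiff_subset)⟩
      · obtain ⟨-, -, t, ht, -, hvt⟩ := hPp.exists_reachIn_through hvP
        exact ⟨t, ht, hvt⟩
    exact hQmin.not_reachIn_of_isLeftSep_union_singleton hPp.1.1 (hfar Q hQmin) hQ ht hvt

/-- Adding a vertex to `S` increases `λ^L` iff it lies in the far side of (or on)
the farthest minimum left-restricted separator. -/
theorem stmt5 {V : Type} [Fintype V] (G : SimpleGraph V) (S T : Set V)
    (hdisj : Disjoint S T) (Pp : Set V)
    (hPp : IsMinLeftSep G S T Pp)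
    (hfar : ∀ P : Set V, IsMinLeftSep G S T P → reachSet G S P ⊆ reachSet G S Pp) :
    ∀ v : V, lamL G S T < lamL G (S ∪ {v}) T ↔ v ∈ reachSet G T Pp ∪ Pp :=
  stmt5_general G S T Pp hPp hfar
end

section
/- Let G be a finite simple graph, let S, T ⊆ V(G) be disjoint sets admitting a left-restricted (S,T)-separator, and let P⁻ be a closest minimum left-restricted (S,T)-separator, i.e., a minimum-size left-restricted (S,T)-separator such that R_G(S,P⁻) ⊆ R_G(S,P) for every minimum-size left-restricted (S,T)-separator P. Then for every vertex v ∈ V(G): λ^L_G(S, T ∪ {v}) > λ^L_G(S,T) if and only if v ∈ R_G(S,P⁻). -/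
open SimpleGraph

lemma lamL_eq_of_min {V : Type} (G : SimpleGraph V) (S T Pm : Set V)
    (h : IsMinLeftSep G S T Pm) : lamL G S T = Pm.ncard := by
  refine le_antisymm (iInf₂_le Pm h.1) (le_iInf₂ fun Q hQ => Nat.cast_le.mpr (h.2 Q hQ))

lemma exists_sep_of_lamL_le {V : Type} (G : SimpleGraph V) (S T : Set V) (n : ℕ)
    (h : lamL G S T ≤ n) : ∃ P, IsLeftSep G S T P ∧ P.ncard ≤ n := by
  by_contra hc
  push_neg at hc
  have h1 : ((n + 1 : ℕ) : ℕ∞) ≤ lamL G S T := by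
    refine le_iInf₂ fun P hP => ?_
    exact_mod_cast Nat.cast_le.mpr (hc P hP)
  have := h1.trans h
  exact absurd (Nat.cast_le.mp this) (by omega)

/-- Adding a vertex to `T` increases `λ^L` iff it lies in the near side of the
closest minimum left-restricted separator. -/
theorem stmt6 {V : Type} [Fintype V] (G : SimpleGraph V) (S T : Set V)
    (hdisj : Disjoint S T) (Pm : Set V)
    (hPm : IsMinLeftSep G S T Pm)
    (hclose : ∀ P : Set V, IsMinLeftSep G S T P → reachSet G S Pm ⊆ reachSet G S P) :
    ∀ v : V, lamL G S T < lamL G S (T ∪ {v}) ↔ v ∈ reachSet G S Pm := by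
  intro v
  have hlam : lamL G S T = Pm.ncard := lamL_eq_of_min G S T Pm hPm
  constructor
  · intro hlt
    by_contra hv
    have hsep : IsLeftSep G S (T ∪ {v}) Pm := by
      refine ⟨?_, hPm.1.2⟩
      intro s hs t ht hr
      rcases ht.1 with htT | htv
      · exact hPm.1.1 s hs t ⟨htT, ht.2⟩ hr
      · rw [Set.mem_singleton_iff] at htv
        subst htv
        exact hv ⟨s, hs, hr⟩
    have hle : lamL G S (T ∪ {v}) ≤ Pm.ncard := iInf₂_le Pm hsep
    rw [hlam] at hlt
    exact absurd (hle.trans_lt hlt) (lt_irrefl _)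
  · intro hv
    by_contra hlt
    push_neg at hlt
    rw [hlam] at hlt
    obtain ⟨P, hP, hPn⟩ := exists_sep_of_lamL_le G S (T ∪ {v}) Pm.ncard hlt
    have hPT : IsLeftSep G S T P :=
      ⟨fun s hs t ht => hP.1 s hs t ⟨Or.inl ht.1, ht.2⟩, hP.2⟩
    have hmin : IsMinLeftSep G S T P :=
      ⟨hPT, fun Q hQ => hPn.trans (hPm.2 Q hQ)⟩
    obtain ⟨s, hs, w, hw⟩ := hclose P hmin hv
    have hvP : v ∉ P := hw v w.end_mem_support
    exact hP.1 s hs v ⟨Or.inr rfl, hvP⟩ ⟨w, hw⟩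
end

section
/- Let G be a finite simple graph, let S, T ⊆ V(G), let P ⊆ V(G) be a minimum-size left-restricted (S,T)-separator, and let S' = R_G(S,P). Then for every vertex set C with S ⊆ C ⊆ V(G) \ T it holds that |N_G(C ∪ S')| ≤ |N_G(C)|. -/
open SimpleGraph

/-- The open neighborhood of a vertex set `C` in a graph `G`. -/
def openNbhd {V : Type} (G : SimpleGraph V) (C : Set V) : Set V :=
  {v | v ∉ C ∧ ∃ u ∈ C, G.Adj u v}

lemma submod_nbhd {V : Type} [Fintype V] (G : SimpleGraph V) (A B : Set V) :
    (openNbhd G (A ∪ B)).ncard + (openNbhd G (A ∩ B)).ncard ≤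
      (openNbhd G A).ncard + (openNbhd G B).ncard := by
  have h1 : openNbhd G (A ∪ B) ∪ openNbhd G (A ∩ B) ⊆ openNbhd G A ∪ openNbhd G B := by
    rintro v (⟨hv, u, hu, hadj⟩ | ⟨hv, u, hu, hadj⟩)
    · rcases hu with hu | hu
      · exact Or.inl ⟨fun h => hv (Or.inl h), u, hu, hadj⟩
      · exact Or.inr ⟨fun h => hv (Or.inr h), u, hu, hadj⟩
    · by_cases hvA : v ∈ A
      · exact Or.inr ⟨fun h => hv ⟨hvA, h⟩, u, hu.2, hadj⟩
      · exact Or.inl ⟨hvA, u, hu.1, hadj⟩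
  have h2 : openNbhd G (A ∪ B) ∩ openNbhd G (A ∩ B) ⊆ openNbhd G A ∩ openNbhd G B := by
    rintro v ⟨⟨hv, -⟩, ⟨-, u, hu, hadj⟩⟩
    exact ⟨⟨fun h => hv (Or.inl h), u, hu.1, hadj⟩, ⟨fun h => hv (Or.inr h), u, hu.2, hadj⟩⟩
  calc (openNbhd G (A ∪ B)).ncard + (openNbhd G (A ∩ B)).ncard
      = (openNbhd G (A ∪ B) ∪ openNbhd G (A ∩ B)).ncard
        + (openNbhd G (A ∪ B) ∩ openNbhd G (A ∩ B)).ncard :=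
        (Set.ncard_union_add_ncard_inter _ _).symm
    _ ≤ (openNbhd G A ∪ openNbhd G B).ncard + (openNbhd G A ∩ openNbhd G B).ncard :=
        add_le_add (Set.ncard_le_ncard h1 (Set.toFinite _))
          (Set.ncard_le_ncard h2 (Set.toFinite _))
    _ = (openNbhd G A).ncard + (openNbhd G B).ncard :=
        Set.ncard_union_add_ncard_inter _ _

lemma exit_lemma {V : Type} (G : SimpleGraph V) (Z : Set V) :
    ∀ {u v : V} (w : G.Walk u v), u ∈ Z → v ∉ Z →
      ∃ x ∈ w.support, x ∈ openNbhd G Z := by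
  intro u v w
  induction w with
  | nil => intro h h'; exact absurd h h'
  | @cons a b c h p ih =>
    intro hu hv
    by_cases hm : b ∈ Z
    · obtain ⟨x, hx, hx'⟩ := ih hm hv
      exact ⟨x, List.mem_cons_of_mem _ hx, hx'⟩
    · exact ⟨b, List.mem_cons_of_mem _ p.start_mem_support, ⟨hm, a, hu, h⟩⟩

lemma nbhd_reach_subset {V : Type} (G : SimpleGraph V) (S P : Set V) :
    openNbhd G (reachSet G S P) ⊆ P := by
  rintro v ⟨hv, u, ⟨s, hs, w, hw⟩, hadj⟩
  by_contra hvP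
  refine hv ⟨s, hs, w.append (Walk.cons hadj Walk.nil), ?_⟩
  intro x hx
  rw [Walk.support_append] at hx
  rcases List.mem_append.mp hx with hx | hx
  · exact hw x hx
  · simp only [Walk.support_cons, Walk.support_nil, List.tail_cons,
      List.mem_singleton] at hx
    subst hx; exact hvP

lemma nbhd_isLeftSep {V : Type} (G : SimpleGraph V) (S T Z : Set V)
    (hSZ : S ⊆ Z) (hTZ : ∀ t ∈ T, t ∉ Z) :
    IsLeftSep G S T (openNbhd G Z) := by
  constructor
  · rintro s ⟨hs, -⟩ t ⟨ht, -⟩ ⟨w, hw⟩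
    obtain ⟨x, hx, hxQ⟩ := exit_lemma G Z w (hSZ hs) (hTZ t ht)
    exact (hw x hx) hxQ
  · ext x
    simp only [Set.mem_inter_iff, Set.mem_empty_iff_false, iff_false, not_and]
    intro hx hxS
    exact hx.1 (hSZ hxS)

/-- Taking the union with the set reachable from `S` past a minimum left-restricted
separator does not increase the neighborhood size. -/
theorem stmt8 {V : Type} [Fintype V] (G : SimpleGraph V) (S T P : Set V)
    (hP : IsMinLeftSep G S T P) :
    ∀ C : Set V, S ⊆ C → C ⊆ Tᶜ →
      (openNbhd G (C ∪ reachSet G S P)).ncard ≤ (openNbhd G C).ncard := by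
  intro C hSC hCT
  set S' := reachSet G S P with hS'def
  have hPS : P ∩ S = ∅ := hP.1.2
  have hSS' : S ⊆ S' := by
    intro s hs
    have hsP : s ∉ P := fun hp =>
      Set.eq_empty_iff_forall_notMem.mp hPS s ⟨hp, hs⟩
    refine ⟨s, ⟨hs, hsP⟩, Walk.nil, ?_⟩
    intro x hx
    simp only [Walk.support_nil, List.mem_singleton] at hx
    subst hx; exact hsP
  have hsep : IsLeftSep G S T (openNbhd G (C ∩ S')) :=
    nbhd_isLeftSep G S T (C ∩ S') (fun s hs => ⟨hSC hs, hSS' hs⟩)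
      (fun t ht hz => hCT hz.1 ht)
  have hmin : P.ncard ≤ (openNbhd G (C ∩ S')).ncard := hP.2 _ hsep
  have h1 := submod_nbhd G C S'
  have h2 : (openNbhd G S').ncard ≤ P.ncard :=
    Set.ncard_le_ncard (nbhd_reach_subset G S P) (Set.toFinite _)
  omega
end

section
/- Let 𝓕 be a finite set of finite simple graphs, let G be a finite simple graph containing disjoint sets S, T ⊆ V(G), let k be a natural number, and let C ⊆ V(G) be seclusion-maximal with respect to the property "G[C] is connected, G[C] is 𝓕-free, |N_G(C)| ≤ k, and S ⊆ C ⊆ V(G) \ T". Then for each v ∈ N_G(C), the set C is seclusion-maximal in the graph G − v with respect to the property "(G−v)[C] is connected, (G−v)[C] is 𝓕-free, |N_{G−v}(C)| ≤ k − 1, and S ⊆ C ⊆ V(G − v) \ T". -/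
open SimpleGraph

/-- `C` is seclusion-maximal for property `Pr`: it satisfies `Pr` and every strict
superset satisfying `Pr` has a strictly larger open neighborhood. -/
def SeclusionMaximal {V : Type} (G : SimpleGraph V) (Pr : Set V → Prop) (C : Set V) : Prop :=
  Pr C ∧ ∀ C' : Set V, C ⊂ C' → Pr C' → (openNbhd G C).ncard < (openNbhd G C').ncard

/-- The graph `G − v`, kept on the same vertex type: all edges incident to `v`
are removed, and vertex sets of `G − v` are the sets avoiding `v`. -/
def deleteVert {V : Type} (G : SimpleGraph V) (v : V) : SimpleGraph V where
  Adj x y := G.Adj x y ∧ x ≠ v ∧ y ≠ v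
  symm := ⟨fun x y h => ⟨h.1.symm, h.2.2, h.2.1⟩⟩
  loopless := ⟨fun x h => G.ne_of_adj h.1 rfl⟩

/-!
Deleting a neighbour `v` of `C` removes exactly the vertex `v` from the neighbourhood of every
superset of `C` that avoids `v`, and changes nothing inside such a set. Hence on these sets the
property for `G − v` with budget `k - 1` coincides with the property for `G` with budget `k`,
and all neighbourhood sizes drop by one, so comparisons between them are preserved.
-/

section DeleteVert

variable {V : Type} (G : SimpleGraph V) {v : V} {C D : Set V}

lemma induce_deleteVert_of_not_mem (hv : v ∉ C) : (deleteVert G v).induce C = G.induce C := by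
  ext ⟨x, hx⟩ ⟨y, hy⟩
  have hxv : x ≠ v := fun h => hv (h ▸ hx)
  have hyv : y ≠ v := fun h => hv (h ▸ hy)
  simp [deleteVert, hxv, hyv]

lemma openNbhd_deleteVert (hv : v ∉ C) : openNbhd (deleteVert G v) C = openNbhd G C \ {v} := by
  ext w
  constructor
  · rintro ⟨hw, u, hu, hadj, -, hwv⟩
    exact ⟨⟨hw, u, hu, hadj⟩, hwv⟩
  · rintro ⟨⟨hw, u, hu, hadj⟩, hwv⟩
    exact ⟨hw, u, hu, hadj, fun h => hv (h ▸ hu), hwv⟩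

variable {G} in
lemma mem_openNbhd_of_subset (hv : v ∈ openNbhd G C) (hCD : C ⊆ D) (hvD : v ∉ D) :
    v ∈ openNbhd G D :=
  let ⟨_, u, hu, hadj⟩ := hv
  ⟨hvD, u, hCD hu, hadj⟩

lemma ncard_openNbhd_deleteVert_add_one [Finite V] (hv : v ∈ openNbhd G C) :
    (openNbhd (deleteVert G v) C).ncard + 1 = (openNbhd G C).ncard := by
  rw [openNbhd_deleteVert G hv.1]
  exact Set.ncard_sdiff_singleton_add_one hv (Set.toFinite _)

theorem SeclusionMaximal.deleteVert [Finite V] {P Q : Set V → Prop}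
    (hC : SeclusionMaximal G P C) (hv : v ∈ openNbhd G C)
    (hQ_not_mem : ∀ D, Q D → v ∉ D) (hQP : ∀ D, C ⊆ D → v ∉ D → (Q D ↔ P D)) :
    SeclusionMaximal (deleteVert G v) Q C := by
  refine ⟨(hQP C subset_rfl hv.1).2 hC.1, fun C' hCC' hQC' => ?_⟩
  have hvC' : v ∉ C' := hQ_not_mem C' hQC'
  have hlt := hC.2 C' hCC' ((hQP C' hCC'.1 hvC').1 hQC')
  have hN := ncard_openNbhd_deleteVert_add_one G hv
  have hN' := ncard_openNbhd_deleteVert_add_one G (mem_openNbhd_of_subset hv hCC'.1 hvC')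
  omega

end DeleteVert

def IsConnectedFreeSecluded {V ι : Type} {Fv : ι → Type} (Gf : ∀ i, SimpleGraph (Fv i))
    (G : SimpleGraph V) (S T : Set V) (k : ℕ) (D : Set V) : Prop :=
  (G.induce D).Connected ∧ (∀ i, IsEmpty ((Gf i) ↪g (G.induce D))) ∧
    (openNbhd G D).ncard ≤ k ∧ S ⊆ D ∧ D ⊆ Tᶜ

lemma isConnectedFreeSecluded_deleteVert_iff {V ι : Type} {Fv : ι → Type} [Finite V]
    (Gf : ∀ i, SimpleGraph (Fv i)) {G : SimpleGraph V} {S T : Set V} {k : ℕ} {v : V}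
    {D : Set V} (hk : 1 ≤ k) (hvD : v ∉ D) (hv : v ∈ openNbhd G D) :
    IsConnectedFreeSecluded Gf (deleteVert G v) S ({v} ∪ T) (k - 1) D ↔
      IsConnectedFreeSecluded Gf G S T k D := by
  have hN := ncard_openNbhd_deleteVert_add_one G hv
  have hT : D ⊆ ({v} ∪ T)ᶜ ↔ D ⊆ Tᶜ := by
    rw [Set.compl_union, Set.subset_inter_iff, Set.subset_compl_singleton_iff]
    exact and_iff_right hvD
  unfold IsConnectedFreeSecluded
  rw [induce_deleteVert_of_not_mem G hvD, hT]
  exact and_congr_right' <| and_congr_right' <| and_congr_left' (by omega)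

theorem stmt9_general {V : Type} [Fintype V] {ι : Type} {Fv : ι → Type}
    (Gf : ∀ i, SimpleGraph (Fv i))
    (G : SimpleGraph V) (S T : Set V) (k : ℕ) (C : Set V)
    (hC : SeclusionMaximal G (fun D =>
        (G.induce D).Connected ∧
        (∀ i, IsEmpty ((Gf i) ↪g (G.induce D))) ∧
        (openNbhd G D).ncard ≤ k ∧
        S ⊆ D ∧ D ⊆ Tᶜ) C) :
    ∀ v ∈ openNbhd G C,
      SeclusionMaximal (deleteVert G v) (fun D =>
        ((deleteVert G v).induce D).Connected ∧
        (∀ i, IsEmpty ((Gf i) ↪g ((deleteVert G v).induce D))) ∧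
        (openNbhd (deleteVert G v) D).ncard ≤ k - 1 ∧
        S ⊆ D ∧ D ⊆ ({v} ∪ T)ᶜ) C := by
  intro v hv
  have hk : 1 ≤ k := ((Set.ncard_pos (Set.toFinite _)).2 ⟨v, hv⟩).trans_le hC.1.2.2.1
  refine SeclusionMaximal.deleteVert G (Q := IsConnectedFreeSecluded Gf (deleteVert G v) S
    ({v} ∪ T) (k - 1)) hC hv (fun D hD hvD => hD.2.2.2.2 hvD (Or.inl rfl)) fun D hCD hvD => ?_
  exact isConnectedFreeSecluded_deleteVert_iff Gf hk hvD (mem_openNbhd_of_subset hv hCD hvD)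

theorem stmt9 {V : Type} [Fintype V] {ι : Type} [Fintype ι] {Fv : ι → Type}
    [∀ i, Fintype (Fv i)] (Gf : ∀ i, SimpleGraph (Fv i))
    (G : SimpleGraph V) (S T : Set V) (hST : Disjoint S T) (k : ℕ) (C : Set V)
    (hC : SeclusionMaximal G (fun D =>
        (G.induce D).Connected ∧
        (∀ i, IsEmpty ((Gf i) ↪g (G.induce D))) ∧
        (openNbhd G D).ncard ≤ k ∧
        S ⊆ D ∧ D ⊆ Tᶜ) C) :
    ∀ v ∈ openNbhd G C,
      SeclusionMaximal (deleteVert G v) (fun D =>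
        ((deleteVert G v).induce D).Connected ∧
        (∀ i, IsEmpty ((Gf i) ↪g ((deleteVert G v).induce D))) ∧
        (openNbhd (deleteVert G v) D).ncard ≤ k - 1 ∧
        S ⊆ D ∧ D ⊆ ({v} ∪ T)ᶜ) C :=
  stmt9_general Gf G S T k C hC
end

section
/- Let 𝓕 be a finite set of finite simple graphs, G a finite simple graph, S ⊆ V(G), and T ⊆ V(G) \ S. Suppose that some tight enrichment of S with respect to 𝓕 contained in V(G) \ (S ∪ T) exists, but that there is no tight enrichment U ⊆ V(G) \ (S ∪ T) of S such that every connected component of G[U] is adjacent to a vertex of S. Then every tight enrichment U ⊆ V(G) \ (S ∪ T) of S of minimum cardinality induces a connected graph G[U], and no vertex of U is adjacent to a vertex of S. -/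
open SimpleGraph

/-- `D` is a union of connected components of `H`. -/
def ComponentClosed {W : Type} (H : SimpleGraph W) (D : Set W) : Prop :=
  ∀ x ∈ D, ∀ y : W, H.Reachable x y → y ∈ D

/-- `U` is a tight enrichment of `S` with respect to the family `Gf`: there is a
partial forbidden graph (an induced subgraph of some `Gf i` on a union `D` of its
connected components) and an induced-subgraph embedding `φ` of it into `G` with
`U = φ(D) \ S`, such that `G[S]` contains no induced copy of that partial
forbidden graph. -/
def TightEnrichment {V : Type} {ι : Type} {Fv : ι → Type}
    (Gf : ∀ i, SimpleGraph (Fv i)) (G : SimpleGraph V) (S U : Set V) : Prop :=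
  ∃ (i : ι) (D : Set (Fv i)) (φ : ((Gf i).induce D) ↪g G),
    ComponentClosed (Gf i) D ∧
    U = Set.range (fun d : ↥D => φ d) \ S ∧
    IsEmpty (((Gf i).induce D) ↪g (G.induce S))

/-! Let `U` be a minimum tight enrichment, witnessed by `φ : F[D] ↪ G`, and let `C`
be a component of `G[U]` with no neighbour in `S`. Since `C` has no neighbours in
`φ(D) \ C ⊆ (U \ C) ∪ S`, the preimage `D'` of `C` is a union of components of `F`, and so is
`D \ D'`. If `F[D \ D']` has no induced copy in `G[S]`, then `U \ C` is a smaller tight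
enrichment. Otherwise replace `φ` on `D \ D'` by a copy inside `S`: the result is still an
induced embedding of `F[D]`, now with `C` as the part outside `S`, so `C` is a tight
enrichment and minimality forces `C = U`. -/

section ReachIn

variable {V : Type} {G : SimpleGraph V} {A : Set V} {u v x : V}

theorem ReachIn.refl_s11 (hu : u ∈ A) : ReachIn G A u u :=
  ⟨Walk.nil, by simpa using hu⟩

theorem ReachIn.mem_right_s11 (h : ReachIn G A u v) : v ∈ A :=
  h.choose_spec v h.choose.end_mem_support

theorem ReachIn.concat (h : ReachIn G A u v) (hvx : G.Adj v x) (hx : x ∈ A) :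
    ReachIn G A u x := by
  obtain ⟨w, hw⟩ := h
  refine ⟨w.concat hvx, fun y hy => ?_⟩
  rw [Walk.support_concat, List.mem_append, List.mem_singleton] at hy
  rcases hy with hy | rfl
  exacts [hw y hy, hx]

theorem ReachIn.reachable_induce (h : ReachIn G A u v) (hu : u ∈ A) (hv : v ∈ A) :
    (G.induce A).Reachable ⟨u, hu⟩ ⟨v, hv⟩ :=
  ⟨h.choose.induce A h.choose_spec⟩

end ReachIn

section ComponentClosed

variable {W : Type} {H : SimpleGraph W} {A B : Set W}

theorem ComponentClosed.of_adj (h : ∀ x ∈ A, ∀ y, H.Adj x y → y ∈ A) :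
    ComponentClosed H A := by
  rintro x hx y ⟨p⟩
  induction p with
  | nil => exact hx
  | cons hadj _ ih => exact ih (h _ hx _ hadj)

theorem ComponentClosed.diff (hA : ComponentClosed H A) (hB : ComponentClosed H B) :
    ComponentClosed H (A \ B) :=
  fun x hx y hxy => ⟨hA x hx.1 y hxy, fun hy => hx.2 (hB y hy x hxy.symm)⟩

end ComponentClosed

section Embedding

variable {W V : Type*} {H : SimpleGraph W} {G : SimpleGraph V}

theorem SimpleGraph.Embedding.exists_induce_piecewise {D A : Set W} (hAD : A ⊆ D)
    (hA : ∀ a ∈ A, ∀ b ∈ D \ A, ¬ H.Adj a b)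
    (ψ₁ : H.induce A ↪g G) (ψ₂ : H.induce (D \ A) ↪g G)
    (hne : ∀ x y, ψ₁ x ≠ ψ₂ y) (hnadj : ∀ x y, ¬ G.Adj (ψ₁ x) (ψ₂ y)) :
    ∃ ψ : H.induce D ↪g G, Set.range ψ = Set.range ψ₁ ∪ Set.range ψ₂ := by
  classical
  let f : D → V := fun x => if h : x.1 ∈ A then ψ₁ ⟨x, h⟩ else ψ₂ ⟨x, x.2, h⟩
  have hf₁ (x : D) (h : x.1 ∈ A) : f x = ψ₁ ⟨x, h⟩ := dif_pos h
  have hf₂ (x : D) (h : x.1 ∉ A) : f x = ψ₂ ⟨x, x.2, h⟩ := dif_neg h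
  have hinj : Function.Injective f := by
    intro x y hxy
    by_cases hx : x.1 ∈ A <;> by_cases hy : y.1 ∈ A
    · rw [hf₁ x hx, hf₁ y hy] at hxy
      exact Subtype.ext (congrArg Subtype.val (ψ₁.injective hxy) :)
    · exact absurd (hf₁ x hx ▸ hf₂ y hy ▸ hxy) (hne _ _)
    · exact absurd (hf₂ x hx ▸ hf₁ y hy ▸ hxy).symm (hne _ _)
    · rw [hf₂ x hx, hf₂ y hy] at hxy
      exact Subtype.ext (congrArg Subtype.val (ψ₂.injective hxy) :)
  have hadj (x y : D) : G.Adj (f x) (f y) ↔ H.Adj x y := by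
    by_cases hx : x.1 ∈ A <;> by_cases hy : y.1 ∈ A
    · rw [hf₁ x hx, hf₁ y hy, ψ₁.map_adj_iff, comap_adj]; rfl
    · rw [hf₁ x hx, hf₂ y hy]
      exact iff_of_false (hnadj _ _) (hA x hx y ⟨y.2, hy⟩)
    · rw [hf₂ x hx, hf₁ y hy]
      exact iff_of_false (fun h => hnadj _ _ h.symm) (fun h => hA y hy x ⟨x.2, hx⟩ h.symm)
    · rw [hf₂ x hx, hf₂ y hy, ψ₂.map_adj_iff, comap_adj]; rfl
  refine ⟨⟨⟨f, hinj⟩, fun {x y} => hadj x y⟩, ?_⟩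
  ext v
  constructor
  · rintro ⟨x, rfl⟩
    by_cases hx : x.1 ∈ A
    · exact Or.inl ⟨_, (hf₁ x hx).symm⟩
    · exact Or.inr ⟨_, (hf₂ x hx).symm⟩
  · rintro (⟨x, rfl⟩ | ⟨x, rfl⟩)
    · exact ⟨⟨x, hAD x.2⟩, hf₁ ⟨x, hAD x.2⟩ x.2⟩
    · exact ⟨⟨x, x.2.1⟩, hf₂ ⟨x, x.2.1⟩ x.2.2⟩

end Embedding

theorem TightEnrichment.of_subset_or_diff {V ι : Type} {Fv : ι → Type}
    {Gf : ∀ i, SimpleGraph (Fv i)} {G : SimpleGraph V} {S U C : Set V}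
    (hU : TightEnrichment Gf G S U) (hCU : C ⊆ U)
    (hC : ∀ v ∈ C, ∀ x ∈ U ∪ S, G.Adj v x → x ∈ C) :
    TightEnrichment Gf G S C ∨ TightEnrichment Gf G S (U \ C) := by
  obtain ⟨i, D, φ, hD, rfl, hS⟩ := hU
  set D' : Set (Fv i) := {d | ∃ h : d ∈ D, φ ⟨d, h⟩ ∈ C}
  have hD'D : D' ⊆ D := fun d hd => hd.1
  have hCS : ∀ v ∈ C, v ∉ S := fun v hv => (hCU hv).2
  have hD' : ComponentClosed (Gf i) D' := by
    refine ComponentClosed.of_adj fun d ⟨hd, hdC⟩ e hde => ?_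
    have he : e ∈ D := hD d hd e hde.reachable
    have hφ : G.Adj (φ ⟨d, hd⟩) (φ ⟨e, he⟩) := φ.map_adj_iff.2 hde
    refine ⟨he, hC _ hdC _ ?_ hφ⟩
    by_cases heS : φ ⟨e, he⟩ ∈ S
    exacts [Or.inr heS, Or.inl ⟨⟨_, rfl⟩, heS⟩]
  have hrange_diff : Set.range (φ.comp ((Gf i).induceHomOfLE (Set.sdiff_subset : D \ D' ⊆ D))) =
      Set.range φ \ C := by
    ext v
    constructor
    · rintro ⟨⟨d, hd, hdD'⟩, rfl⟩
      exact ⟨⟨_, rfl⟩, fun h => hdD' ⟨hd, h⟩⟩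
    · rintro ⟨⟨⟨d, hd⟩, rfl⟩, hvC⟩
      exact ⟨⟨d, hd, fun h => hvC h.2⟩, rfl⟩
  by_cases hE : IsEmpty ((Gf i).induce (D \ D') ↪g G.induce S)
  · refine Or.inr ⟨i, D \ D', φ.comp ((Gf i).induceHomOfLE Set.sdiff_subset), hD.diff hD', ?_, hE⟩
    change _ = Set.range (φ.comp _) \ S
    rw [hrange_diff, sdiff_right_comm]
  · obtain ⟨χ⟩ := not_isEmpty_iff.1 hE
    let ψ₁ := φ.comp ((Gf i).induceHomOfLE hD'D)
    let ψ₂ := (Embedding.induce S).comp χ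
    have hψ₁ (x) : ψ₁ x ∈ C := x.2.2
    have hψ₂ (y) : ψ₂ y ∈ S := (χ y).2
    obtain ⟨ψ, hψ⟩ := Embedding.exists_induce_piecewise hD'D
      (fun a ha b hb hab => hb.2 (hD' a ha b hab.reachable)) ψ₁ ψ₂
      (fun x y h => hCS _ (hψ₁ x) (h ▸ hψ₂ y))
      (fun x y h => hCS _ (hC _ (hψ₁ x) _ (Or.inr (hψ₂ y)) h) (hψ₂ y))
    refine Or.inl ⟨i, D, ψ, hD, ?_, hS⟩
    change _ = Set.range ψ \ S
    rw [hψ]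
    ext v
    constructor
    · intro hv
      obtain ⟨⟨d, hd⟩, rfl⟩ := (hCU hv).1
      exact ⟨Or.inl ⟨⟨d, hd, hv⟩, rfl⟩, hCS _ hv⟩
    · rintro ⟨⟨x, rfl⟩ | ⟨y, rfl⟩, hvS⟩
      exacts [hψ₁ x, absurd (hψ₂ y) hvS]

theorem stmt11_general {V : Type} [Fintype V] {ι : Type} {Fv : ι → Type}
    (Gf : ∀ i, SimpleGraph (Fv i))
    (G : SimpleGraph V) (S T : Set V)
    -- but none all of whose connected components are adjacent to `S`
    (hno : ¬ ∃ U : Set V, U ⊆ (S ∪ T)ᶜ ∧ TightEnrichment Gf G S U ∧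
        ∀ u ∈ U, ∃ u' : V, ReachIn G U u u' ∧ ∃ s ∈ S, G.Adj u' s) :
    ∀ U : Set V, U ⊆ (S ∪ T)ᶜ → TightEnrichment Gf G S U →
      (∀ U' : Set V, U' ⊆ (S ∪ T)ᶜ → TightEnrichment Gf G S U' → U.ncard ≤ U'.ncard) →
      (G.induce U).Connected ∧ ∀ u ∈ U, ∀ s ∈ S, ¬ G.Adj u s := by
  intro U hU hTE hmin
  push Not at hno
  obtain ⟨u₀, hu₀, hfar⟩ := hno U hU hTE
  set C := {v | ReachIn G U u₀ v}
  have hCU : C ⊆ U := fun v hv => ReachIn.mem_right_s11 hv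
  have hC : ∀ v ∈ C, ∀ x ∈ U ∪ S, G.Adj v x → x ∈ C := by
    rintro v hv x (hx | hx) hvx
    exacts [ReachIn.concat hv hvx hx, absurd hvx (hfar v hv x hx)]
  have hCeq : C = U := by
    rcases hTE.of_subset_or_diff hCU hC with hCte | hdiff
    · exact Set.eq_of_subset_of_ncard_le hCU (hmin C (hCU.trans hU) hCte)
    · have hlt : (U \ C).ncard < U.ncard :=
        Set.ncard_lt_ncard ⟨Set.sdiff_subset, fun h => (h hu₀).2 (ReachIn.refl_s11 hu₀)⟩
      exact absurd (hmin _ (Set.sdiff_subset.trans hU) hdiff) hlt.not_ge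
  have hUC : U ⊆ C := hCeq.symm.subset
  refine ⟨(connected_iff_exists_forall_reachable _).2 ⟨⟨u₀, hu₀⟩, fun ⟨v, hv⟩ => ?_⟩,
    fun u hu s hs => hfar u (hUC hu) s hs⟩
  exact ReachIn.reachable_induce (hUC hv) hu₀ hv

theorem stmt11 {V : Type} [Fintype V] {ι : Type} [Fintype ι] {Fv : ι → Type}
    [∀ i, Fintype (Fv i)] (Gf : ∀ i, SimpleGraph (Fv i))
    (G : SimpleGraph V) (S T : Set V) (hT : T ⊆ Sᶜ)
    -- some tight enrichment inside `V(G) \ (S ∪ T)` exists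
    (hex : ∃ U : Set V, U ⊆ (S ∪ T)ᶜ ∧ TightEnrichment Gf G S U)
    -- but none all of whose connected components are adjacent to `S`
    (hno : ¬ ∃ U : Set V, U ⊆ (S ∪ T)ᶜ ∧ TightEnrichment Gf G S U ∧
        ∀ u ∈ U, ∃ u' : V, ReachIn G U u u' ∧ ∃ s ∈ S, G.Adj u' s) :
    ∀ U : Set V, U ⊆ (S ∪ T)ᶜ → TightEnrichment Gf G S U →
      (∀ U' : Set V, U' ⊆ (S ∪ T)ᶜ → TightEnrichment Gf G S U' → U.ncard ≤ U'.ncard) →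
      (G.induce U).Connected ∧ ∀ u ∈ U, ∀ s ∈ S, ¬ G.Adj u s :=
  stmt11_general Gf G S T hno
end

section
/- Let n ≥ 3, let G be the cycle graph on n vertices, and let r be a vertex of G. The number of vertex sets C that are seclusion-maximal with respect to the property "r ∈ C, G[C] is connected, G[C] is acyclic, and |N_G(C)| ≤ 1" is exactly n − 1; these sets are exactly the sets V(G) \ {v} for v ≠ r. -/
/-!
Deleting a vertex `v` from the cycle leaves a path, so `{v}ᶜ` induces a tree whose only
neighbour is `v`; the whole cycle is not a tree. Conversely, let `C ≠ V` contain `r` and have at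
most one neighbour, and choose `v ∉ C` with `N(C) ⊆ {v}`. The cycle minus `v` is connected, so
a vertex of `{v}ᶜ` outside `C` would yield an edge leaving `C` inside `{v}ᶜ`, i.e. a neighbour of
`C` other than `v`; hence `C = {v}ᶜ`. The only strict superset of `{v}ᶜ` is the whole vertex set,
which does not have the property, so each `{v}ᶜ` with `v ≠ r` is seclusion-maximal.
-/

open SimpleGraph

/-- The cycle graph on `ℤ/nℤ`: `i` is adjacent to `i ± 1`. -/
def zmodCycle (n : ℕ) : SimpleGraph (ZMod n) where
  Adj i j := i ≠ j ∧ (i - j = 1 ∨ j - i = 1)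
  symm := ⟨fun i j h => ⟨h.1.symm, h.2.symm⟩⟩
  loopless := ⟨fun i h => h.1 rfl⟩


namespace ZMod

theorem natCast_inj_of_lt {n a b : ℕ} (ha : a < n) (hb : b < n) :
    (a : ZMod n) = b ↔ a = b := by
  rw [natCast_eq_natCast_iff', Nat.mod_eq_of_lt ha, Nat.mod_eq_of_lt hb]

theorem natCast_sub_natCast_eq_one_iff {n a b : ℕ} (ha : a < n) (hb : b + 1 < n) :
    (a : ZMod n) - b = 1 ↔ a = b + 1 := by
  rw [sub_eq_iff_eq_add', ← Nat.cast_add_one, natCast_inj_of_lt ha hb]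

theorem add_natCast_add_one_ne {n i : ℕ} (v : ZMod n) (hi : i + 1 < n) : v + i + 1 ≠ v := by
  rw [Ne, add_assoc, add_eq_left, ← Nat.cast_add_one, natCast_eq_zero_iff]
  exact Nat.not_dvd_of_pos_of_lt i.succ_pos hi

end ZMod

namespace SimpleGraph

theorem isAcyclic_pathGraph (n : ℕ) : (pathGraph n).IsAcyclic := by
  intro u c hc
  obtain ⟨m, hm, hmax⟩ := c.support.toFinset.exists_max_image Fin.val ⟨u, by simp⟩
  rw [List.mem_toFinset] at hm
  -- Rotate the cycle to start at its largest vertex `m`: both cycle-neighbours of `m` are `m - 1`.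
  set c' := c.rotate m hm
  have hc' : c'.IsCycle := (Walk.isCycle_rotate hm).mpr hc
  have hpred : ∀ w ∈ c'.support, (pathGraph n).Adj m w → w.val + 1 = m.val := by
    intro w hw hadj
    have := hmax w (List.mem_toFinset.mpr ((c.mem_support_rotate_iff m hm).mp hw))
    rw [pathGraph_adj] at hadj
    omega
  have hsnd : c'.snd.val + 1 = m.val :=
    hpred _ (c'.getVert_mem_support 1) (c'.adj_snd hc'.not_nil)
  have hpen : c'.penultimate.val + 1 = m.val :=
    hpred _ (c'.getVert_mem_support _) (c'.adj_penultimate hc'.not_nil).symm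
  exact hc'.snd_ne_penultimate (Fin.ext (by omega))

end SimpleGraph

section Seclusion

variable {V : Type} {G : SimpleGraph V} {P : Set V → Prop}

theorem openNbhd_subset_compl (G : SimpleGraph V) (C : Set V) : openNbhd G C ⊆ Cᶜ :=
  fun _ hv => hv.1

theorem setOf_seclusionMaximal_eq (hP : ∀ C C', P C → C ⊂ C' → ¬ P C') :
    {C | SeclusionMaximal G P C} = {C | P C} :=
  Set.ext fun C => ⟨And.left, fun hC => ⟨hC, fun C' hCC' hC' => (hP C C' hC hCC' hC').elim⟩⟩

theorem eq_compl_singleton_of_openNbhd_subset {C : Set V} {c v : V}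
    (hG : (G.induce {v}ᶜ).Connected) (hc : c ∈ C) (hv : v ∉ C) (hN : openNbhd G C ⊆ {v}) :
    C = {v}ᶜ := by
  ext x
  refine ⟨fun hx hxv => hv (hxv ▸ hx), fun hxv => ?_⟩
  by_contra hx
  obtain ⟨p⟩ := hG.preconnected ⟨c, fun hcv => hv (hcv ▸ hc)⟩ ⟨x, hxv⟩
  obtain ⟨d, -, hd₁, hd₂⟩ := p.exists_boundary_dart {y | y.val ∈ C} hc hx
  exact d.snd.2 (hN ⟨hd₂, d.fst, hd₁, d.adj⟩)

theorem exists_eq_compl_singleton_of_ncard_openNbhd_le_one [Finite V] {C : Set V} {c : V}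
    (hG : ∀ v, (G.induce {v}ᶜ).Connected) (hc : c ∈ C) (hC : C ≠ Set.univ)
    (hN : (openNbhd G C).ncard ≤ 1) : ∃ v, C = {v}ᶜ := by
  obtain ⟨w, hw⟩ := (Set.ne_univ_iff_exists_notMem C).mp hC
  rcases (Set.ncard_le_one_iff_subsingleton.mp hN).eq_empty_or_singleton with hN | ⟨v, hN⟩
  · exact ⟨w, eq_compl_singleton_of_openNbhd_subset (hG w) hc hw (hN ▸ Set.empty_subset _)⟩
  · refine ⟨v, eq_compl_singleton_of_openNbhd_subset (hG v) hc ?_ hN.subset⟩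
    exact openNbhd_subset_compl G C (hN ▸ rfl)

theorem ncard_setOf_eq_compl_singleton [Finite V] (r : V) :
    {C : Set V | ∃ v, v ≠ r ∧ C = {v}ᶜ}.ncard = Nat.card V - 1 := by
  have himage : {C : Set V | ∃ v, v ≠ r ∧ C = {v}ᶜ} = (fun v => {v}ᶜ) '' {r}ᶜ := by
    ext C
    simp [eq_comm]
  have hinj : Function.Injective fun v : V => ({v}ᶜ : Set V) :=
    fun _ _ h => Set.singleton_injective (compl_injective h)
  rw [himage, Set.ncard_image_of_injective _ hinj, Set.ncard_compl, Set.ncard_singleton]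

end Seclusion

def IsSecludedTree {V : Type} (G : SimpleGraph V) (r : V) (k : ℕ) (C : Set V) : Prop :=
  r ∈ C ∧ (G.induce C).Connected ∧ (G.induce C).IsAcyclic ∧ (openNbhd G C).ncard ≤ k

section Cycle

variable {n : ℕ}

theorem zmodCycle_adj {x y : ZMod n} :
    (zmodCycle n).Adj x y ↔ x ≠ y ∧ (x - y = 1 ∨ y - x = 1) := Iff.rfl

theorem zmodCycle_eq_cycleGraph (k : ℕ) : zmodCycle (k + 3) = cycleGraph (k + 3) := by
  ext u v
  exact ⟨fun h => h.2, fun h => ⟨h.ne, h⟩⟩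

theorem zmodCycle_not_isAcyclic (hn : 3 ≤ n) : ¬ (zmodCycle n).IsAcyclic := by
  obtain ⟨k, rfl⟩ : ∃ k, n = k + 3 := ⟨n - 3, by omega⟩
  rw [zmodCycle_eq_cycleGraph]
  exact fun h => h _ cycleGraph.isCycle_cycle

variable [NeZero n]

noncomputable def complSingletonEquiv (v : ZMod n) : Fin (n - 1) ≃ ({v}ᶜ : Set (ZMod n)) :=
  Equiv.ofBijective (fun i => ⟨v + i.val + 1, ZMod.add_natCast_add_one_ne v (by omega)⟩) <| by
    constructor
    · intro i j h
      have h' : v + (i.val : ZMod n) + 1 = v + j.val + 1 := congrArg Subtype.val h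
      rw [add_left_inj, add_right_inj, ZMod.natCast_inj_of_lt (by omega) (by omega)] at h'
      exact Fin.ext h'
    · rintro ⟨x, hx⟩
      have hk0 : (x - v).val ≠ 0 := by simpa [sub_eq_zero] using hx
      refine ⟨⟨(x - v).val - 1, by have := (x - v).val_lt; omega⟩, Subtype.ext ?_⟩
      simp only [Nat.cast_pred (Nat.pos_of_ne_zero hk0), ZMod.natCast_val, ZMod.cast_id', id]
      ring

@[simp]
theorem coe_complSingletonEquiv_apply (v : ZMod n) (i : Fin (n - 1)) :
    (complSingletonEquiv v i : ZMod n) = v + i.val + 1 := rfl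

noncomputable def zmodCycleInduceComplIso (v : ZMod n) :
    pathGraph (n - 1) ≃g (zmodCycle n).induce {v}ᶜ where
  toEquiv := complSingletonEquiv v
  map_rel_iff' {i j} := by
    have hi : i.val + 1 < n := by omega
    have hj : j.val + 1 < n := by omega
    simp only [comap_adj, Function.Embedding.subtype_apply, coe_complSingletonEquiv_apply,
      zmodCycle_adj, pathGraph_adj, ne_eq, add_left_inj, add_right_inj,
      add_sub_add_right_eq_sub, add_sub_add_left_eq_sub]
    rw [ZMod.natCast_inj_of_lt (by omega) (by omega), ZMod.natCast_sub_natCast_eq_one_iff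
      (by omega) hj, ZMod.natCast_sub_natCast_eq_one_iff (by omega) hi]
    omega

theorem zmodCycle_induce_compl_isAcyclic (v : ZMod n) :
    ((zmodCycle n).induce {v}ᶜ).IsAcyclic :=
  (zmodCycleInduceComplIso v).isAcyclic_iff.mp (isAcyclic_pathGraph _)

end Cycle

theorem zmodCycle_induce_compl_connected {n : ℕ} (hn : 2 ≤ n) (v : ZMod n) :
    ((zmodCycle n).induce {v}ᶜ).Connected := by
  obtain ⟨k, rfl⟩ : ∃ k, n = k + 2 := ⟨n - 2, by omega⟩
  exact (zmodCycleInduceComplIso v).connected_iff.mp (pathGraph_connected k)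

section SecludedTree

variable {n : ℕ} (hn : 3 ≤ n) {r : ZMod n} {k : ℕ}
include hn

theorem not_isSecludedTree_zmodCycle_univ : ¬ IsSecludedTree (zmodCycle n) r k Set.univ :=
  fun h => zmodCycle_not_isAcyclic hn ((induceUnivIso _).isAcyclic_iff.mp h.2.2.1)

theorem isSecludedTree_zmodCycle_iff {C : Set (ZMod n)} :
    IsSecludedTree (zmodCycle n) r 1 C ↔ ∃ v, v ≠ r ∧ C = {v}ᶜ := by
  have : NeZero n := ⟨by omega⟩
  constructor
  · intro hC
    have hCu : C ≠ Set.univ := by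
      rintro rfl
      exact not_isSecludedTree_zmodCycle_univ hn hC
    obtain ⟨v, rfl⟩ := exists_eq_compl_singleton_of_ncard_openNbhd_le_one
      (zmodCycle_induce_compl_connected (by omega)) hC.1 hCu hC.2.2.2
    exact ⟨v, fun hvr => hC.1 (hvr ▸ rfl), rfl⟩
  · rintro ⟨v, hvr, rfl⟩
    refine ⟨hvr.symm, zmodCycle_induce_compl_connected (by omega) v,
      zmodCycle_induce_compl_isAcyclic v, ?_⟩
    calc (openNbhd (zmodCycle n) {v}ᶜ).ncard ≤ ({v} : Set (ZMod n)).ncard :=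
          Set.ncard_le_ncard ((openNbhd_subset_compl _ _).trans (compl_compl _).subset)
      _ = 1 := Set.ncard_singleton v

theorem not_isSecludedTree_zmodCycle_of_ssubset {C C' : Set (ZMod n)}
    (hC : IsSecludedTree (zmodCycle n) r 1 C) (hCC' : C ⊂ C') :
    ¬ IsSecludedTree (zmodCycle n) r 1 C' := by
  obtain ⟨v, -, rfl⟩ := (isSecludedTree_zmodCycle_iff hn).mp hC
  have hC' := compl_lt_compl_iff_lt.mpr hCC'
  rw [compl_compl, Set.ssubset_singleton_iff, Set.compl_empty_iff] at hC'
  exact hC' ▸ not_isSecludedTree_zmodCycle_univ hn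

end SecludedTree

theorem stmt13 (n : ℕ) (hn : 3 ≤ n) (r : ZMod n) :
    {C : Set (ZMod n) | SeclusionMaximal (zmodCycle n) (fun C =>
        r ∈ C ∧ ((zmodCycle n).induce C).Connected ∧
        ((zmodCycle n).induce C).IsAcyclic ∧
        (openNbhd (zmodCycle n) C).ncard ≤ 1) C}
      = {C : Set (ZMod n) | ∃ v : ZMod n, v ≠ r ∧ C = {v}ᶜ} ∧
    {C : Set (ZMod n) | SeclusionMaximal (zmodCycle n) (fun C =>
        r ∈ C ∧ ((zmodCycle n).induce C).Connected ∧
        ((zmodCycle n).induce C).IsAcyclic ∧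
        (openNbhd (zmodCycle n) C).ncard ≤ 1) C}.ncard = n - 1 := by
  have : NeZero n := ⟨by omega⟩
  have hset : {C | SeclusionMaximal (zmodCycle n) (IsSecludedTree (zmodCycle n) r 1) C}
      = {C : Set (ZMod n) | ∃ v : ZMod n, v ≠ r ∧ C = {v}ᶜ} := by
    rw [setOf_seclusionMaximal_eq fun _ _ => not_isSecludedTree_zmodCycle_of_ssubset hn]
    exact Set.ext fun _ => isSecludedTree_zmodCycle_iff hn
  unfold IsSecludedTree at hset
  refine ⟨hset, ?_⟩
  rw [hset, ncard_setOf_eq_compl_singleton, Nat.card_zmod]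
end

section
/- Let m ≥ 1 and let G be the cycle graph on the 2m+1 vertices ℤ/(2m+1)ℤ, with distinguished vertex s = 0, and for i ∈ {1,…,m} let F_i = {i, m+i} (so the cycle visits s, a_1 = 1, …, a_m = m, b_1 = m+1, …, b_m = 2m consecutively). Then the number of vertex sets C that are seclusion-maximal with respect to the property "s ∈ C, G[C] is connected, |N_G(C)| ≤ 2, and for no i ∈ {1,…,m} does C contain both elements of F_i" is at least m. -/
open SimpleGraph

/-!
For `0 ≤ a < m` the arc of `m + 1` consecutive vertices `m + 1 + a, …, 2m, 0, 1, …, a` contains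
`0`, is connected, has the two neighbours `m + a` and `a + 1`, and contains at most one vertex of
each pair `{i, m + i}`, because an arc of `m + 1` vertices of the `(2m+1)`-cycle contains `x` and
`x + m` only when `x` is its first vertex. Any connected proper superset contains one of the two
neighbours, and either of them completes a pair `{i, m + i}` with a vertex of the arc. So no
proper superset has the property at all, the `m` arcs are seclusion-maximal, and they are distinct.
-/

lemma SeclusionMaximal.of_forall_ssuperset_not {V : Type} {G : SimpleGraph V}
    {Pr : Set V → Prop} {C : Set V} (hC : Pr C) (h : ∀ C', C ⊂ C' → ¬ Pr C') :
    SeclusionMaximal G Pr C :=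
  ⟨hC, fun C' hCC' hC' => absurd hC' (h C' hCC')⟩

lemma exists_mem_openNbhd_of_ssubset {V : Type} {G : SimpleGraph V} {C C' : Set V}
    (hC : C.Nonempty) (hCC' : C ⊂ C') (hconn : (G.induce C').Connected) :
    ∃ v ∈ C', v ∈ openNbhd G C := by
  obtain ⟨c, hc⟩ := hC
  obtain ⟨x, hxC', hxC⟩ := Set.exists_of_ssubset hCC'
  obtain ⟨p⟩ := hconn.preconnected ⟨c, hCC'.subset hc⟩ ⟨x, hxC'⟩
  obtain ⟨d, -, hd₁, hd₂⟩ := p.exists_boundary_dart {y | y.1 ∈ C} hc hxC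
  exact ⟨d.snd, d.snd.2, hd₂, d.fst, hd₁, d.adj⟩

lemma ZMod.natCast_injective_of_lt {n a b : ℕ} (ha : a < n) (hb : b < n)
    (h : (a : ZMod n) = b) : a = b := by
  simpa [ZMod.val_natCast_of_lt ha, ZMod.val_natCast_of_lt hb] using congrArg ZMod.val h

lemma zmodCycle_adj_add_one {n : ℕ} [Fact (1 < n)] (x : ZMod n) :
    (zmodCycle n).Adj x (x + 1) :=
  ⟨by simp, Or.inr (by ring)⟩

def cycleArc {n : ℕ} (s : ZMod n) (k : ℕ) : Set (ZMod n) :=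
  {x | ∃ j ≤ k, x = s + j}

section cycleArc

variable {n : ℕ}

lemma mem_cycleArc_self (s : ZMod n) (k : ℕ) : s ∈ cycleArc s k :=
  ⟨0, Nat.zero_le k, by simp⟩

lemma cycleArc_connected [Fact (1 < n)] (s : ZMod n) (k : ℕ) :
    ((zmodCycle n).induce (cycleArc s k)).Connected := by
  rw [connected_iff_exists_forall_reachable]
  refine ⟨⟨s, mem_cycleArc_self s k⟩, ?_⟩
  rintro ⟨_, j, hj, rfl⟩
  induction j with
  | zero =>
    simp only [Nat.cast_zero, add_zero]
    rfl
  | succ j ih =>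
    refine (ih (by omega)).trans (Adj.reachable ?_)
    simpa [add_assoc] using zmodCycle_adj_add_one (s + (j : ZMod n))

lemma openNbhd_cycleArc_subset (s : ZMod n) (k : ℕ) :
    openNbhd (zmodCycle n) (cycleArc s k) ⊆ {s - 1, s + ((k + 1 : ℕ) : ZMod n)} := by
  rintro v ⟨hv, _, ⟨j, hj, rfl⟩, -, h | h⟩
  · rcases j with _ | j
    · left
      linear_combination -h
    · exact absurd ⟨j, by omega, by push_cast at h ⊢; linear_combination -h⟩ hv
  · rcases hj.lt_or_eq with hj | rfl
    · exact absurd ⟨j + 1, hj, by push_cast; linear_combination h⟩ hv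
    · refine Or.inr (Set.mem_singleton_iff.mpr ?_)
      push_cast
      linear_combination h

lemma ncard_openNbhd_cycleArc_le (s : ZMod n) (k : ℕ) :
    (openNbhd (zmodCycle n) (cycleArc s k)).ncard ≤ 2 :=
  calc (openNbhd (zmodCycle n) (cycleArc s k)).ncard
      ≤ ({s - 1, s + ((k + 1 : ℕ) : ZMod n)} : Set (ZMod n)).ncard :=
        Set.ncard_le_ncard (openNbhd_cycleArc_subset s k) (Set.toFinite _)
    _ ≤ 2 := (Set.ncard_insert_le _ _).trans (by simp)

lemma sub_one_notMem_cycleArc {s : ZMod n} {k : ℕ} (hk : k + 1 < n) : s - 1 ∉ cycleArc s k := by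
  rintro ⟨j, hj, h⟩
  have hdvd : ((j + 1 : ℕ) : ZMod n) = 0 := by
    push_cast
    linear_combination -h
  rw [ZMod.natCast_eq_zero_iff] at hdvd
  exact absurd (Nat.le_of_dvd (by omega) hdvd) (by omega)

lemma cycleArc_injective {k : ℕ} (hk : k + 1 < n) :
    Function.Injective (fun s : ZMod n => cycleArc s k) := by
  intro s t hst
  obtain ⟨j, hj, rfl⟩ : s ∈ cycleArc t k := (congrFun hst s).mp (mem_cycleArc_self s k)
  rcases j with _ | j
  · simp
  · refine absurd ?_ (sub_one_notMem_cycleArc (s := t + ((j + 1 : ℕ) : ZMod n)) hk)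
    rw [show cycleArc _ k = cycleArc t k from hst]
    exact ⟨j, by omega, by push_cast; ring⟩

end cycleArc

lemma natCast_two_mul_add_one_eq_zero (m : ℕ) : 2 * (m : ZMod (2 * m + 1)) + 1 = 0 := by
  exact_mod_cast ZMod.natCast_self (2 * m + 1)

lemma eq_of_mem_cycleArc_of_add_mem {m : ℕ} {s x : ZMod (2 * m + 1)} (hx : x ∈ cycleArc s m)
    (hxm : x + m ∈ cycleArc s m) : x = s := by
  obtain ⟨j, hj, rfl⟩ := hx
  obtain ⟨j', hj', h⟩ := hxm
  have hcast : ((j + m : ℕ) : ZMod (2 * m + 1)) = j' := by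
    push_cast
    linear_combination h
  have := ZMod.natCast_injective_of_lt (by omega) (by omega) hcast
  obtain rfl : j = 0 := by omega
  simp

def Admissible (m : ℕ) : Set (ZMod (2 * m + 1)) → Prop := fun C =>
  (0 : ZMod (2 * m + 1)) ∈ C ∧
  ((zmodCycle (2 * m + 1)).induce C).Connected ∧
  (openNbhd (zmodCycle (2 * m + 1)) C).ncard ≤ 2 ∧
  ∀ i ∈ Finset.Icc 1 m,
    ¬ (((i : ℕ) : ZMod (2 * m + 1)) ∈ C ∧ (((m + i : ℕ) : ZMod (2 * m + 1)) ∈ C))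

section Admissible

variable {m a : ℕ}

lemma admissible_cycleArc (ha : a < m) :
    Admissible m (cycleArc ((m + 1 + a : ℕ) : ZMod (2 * m + 1)) m) := by
  have : Fact (1 < 2 * m + 1) := ⟨by omega⟩
  refine ⟨⟨m - a, by omega, ?_⟩, cycleArc_connected _ _, ncard_openNbhd_cycleArc_le _ _, ?_⟩
  · rw [← Nat.cast_add, show m + 1 + a + (m - a) = 2 * m + 1 by omega, ZMod.natCast_self]
  · rintro i hi ⟨hi₁, hi₂⟩
    rw [Finset.mem_Icc] at hi
    have hstart := eq_of_mem_cycleArc_of_add_mem hi₁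
      (by rwa [Nat.cast_add m i, add_comm (m : ZMod (2 * m + 1))] at hi₂)
    have := ZMod.natCast_injective_of_lt (by omega) (by omega) hstart
    omega

lemma not_admissible_of_cycleArc_ssubset (ha : a < m) {C : Set (ZMod (2 * m + 1))}
    (hC : cycleArc ((m + 1 + a : ℕ) : ZMod (2 * m + 1)) m ⊂ C) : ¬ Admissible m C := by
  rintro ⟨-, hconn, -, hpair⟩
  obtain ⟨v, hvC, hv⟩ :=
    exists_mem_openNbhd_of_ssubset ⟨_, mem_cycleArc_self _ _⟩ hC hconn
  have h0 := natCast_two_mul_add_one_eq_zero m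
  have hsub := hC.subset
  -- The neighbour `m + a` pairs with `a`, or with `2m` when `a = 0`; the neighbour `a + 1`
  -- pairs with the first vertex `m + 1 + a` of the arc.
  rcases openNbhd_cycleArc_subset _ _ hv with rfl | rfl
  · rcases a with _ | a
    · obtain ⟨k, rfl⟩ : ∃ k, m = k + 1 := ⟨m - 1, by omega⟩
      refine hpair (k + 1) (Finset.mem_Icc.mpr ⟨by omega, le_rfl⟩) ⟨?_, hsub ⟨k, by omega, ?_⟩⟩
      · convert hvC using 1
        push_cast
        ring
      · push_cast
        ring
    · refine hpair (a + 1) (Finset.mem_Icc.mpr ⟨by omega, by omega⟩) ⟨hsub ⟨m, le_rfl, ?_⟩, ?_⟩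
      · push_cast
        linear_combination -h0
      · convert hvC using 1
        push_cast
        ring
  · refine hpair (a + 1) (Finset.mem_Icc.mpr ⟨by omega, by omega⟩) ⟨?_, hsub ?_⟩
    · convert hvC using 1
      push_cast
      linear_combination -h0
    · rw [show m + (a + 1) = m + 1 + a by ring]
      exact mem_cycleArc_self _ _

end Admissible

theorem stmt14_general (m : ℕ) :
    m ≤ {C : Set (ZMod (2 * m + 1)) | SeclusionMaximal (zmodCycle (2 * m + 1)) (fun C =>
        (0 : ZMod (2 * m + 1)) ∈ C ∧
        ((zmodCycle (2 * m + 1)).induce C).Connected ∧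
        (openNbhd (zmodCycle (2 * m + 1)) C).ncard ≤ 2 ∧
        ∀ i ∈ Finset.Icc 1 m,
          ¬ (((i : ℕ) : ZMod (2 * m + 1)) ∈ C ∧ (((m + i : ℕ) : ZMod (2 * m + 1)) ∈ C))) C}.ncard := by
  refine Set.le_ncard_of_inj_on_range (fun a => cycleArc ((m + 1 + a : ℕ) : ZMod (2 * m + 1)) m)
    (fun a ha => SeclusionMaximal.of_forall_ssuperset_not (admissible_cycleArc ha)
      fun C hC => not_admissible_of_cycleArc_ssubset ha hC) (fun a ha b hb hab => ?_) (Set.toFinite _)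
  have hstart := cycleArc_injective (by omega) hab
  have := ZMod.natCast_injective_of_lt (by omega) (by omega) hstart
  omega

theorem stmt14 (m : ℕ) (hm : 1 ≤ m) :
    m ≤ {C : Set (ZMod (2 * m + 1)) | SeclusionMaximal (zmodCycle (2 * m + 1)) (fun C =>
        (0 : ZMod (2 * m + 1)) ∈ C ∧
        ((zmodCycle (2 * m + 1)).induce C).Connected ∧
        (openNbhd (zmodCycle (2 * m + 1)) C).ncard ≤ 2 ∧
        ∀ i ∈ Finset.Icc 1 m,
          ¬ (((i : ℕ) : ZMod (2 * m + 1)) ∈ C ∧ (((m + i : ℕ) : ZMod (2 * m + 1)) ∈ C))) C}.ncard :=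
  stmt14_general m
end

section
/- Let G be a finite simple graph on n ≥ 1 vertices and let G' be the graph obtained from G by adding one new vertex u adjacent to every vertex of G. Assign weight n to u and weight 1 to every other vertex. Then the maximum, over all vertex sets C ⊆ V(G') such that G'[C] is connected and triangle-free (contains no K_3 as a subgraph), of the total weight of C equals n + α(G), where α(G) is the maximum size of an independent set of G. -/
open SimpleGraph

/-- The graph obtained from `G` by adding a new vertex (`none`) adjacent exactly
to the vertices of `T`. -/
def addVertex {V : Type} (G : SimpleGraph V) (T : Set V) : SimpleGraph (Option V) where
  Adj a b :=
    match a, b with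
    | some u, some v => G.Adj u v
    | some u, none => u ∈ T
    | none, some v => v ∈ T
    | none, none => False
  symm := by
    refine ⟨?_⟩
    rintro (_ | u) (_ | v) h
    · exact h
    · exact h
    · exact h
    · exact G.adj_symm h
  loopless := by
    refine ⟨?_⟩
    rintro (_ | u) h
    · exact h
    · exact G.loopless.irrefl u h

/-- Total weight of a set of vertices of `Option V`: the new vertex `none` has
weight `|V|`, every original vertex has weight `1`. -/
noncomputable def totalWeight {V : Type} [Fintype V] (C : Set (Option V)) : ℕ :=
  ∑ v ∈ C.toFinite.toFinset, v.elim (Fintype.card V) (fun _ => 1)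

/-- The independence number `α(G)`. -/
noncomputable def indepNum {V : Type} [Fintype V] (G : SimpleGraph V) : ℕ :=
  sSup {k : ℕ | ∃ A : Set V, (∀ a ∈ A, ∀ b ∈ A, ¬ G.Adj a b) ∧ A.ncard = k}

/-!
Since the apex `none` is adjacent to every vertex, a triangle-free set containing it meets `G` in
an independent set, so its weight is at most `n + α(G)`; a set avoiding the apex weighs at most
`n`. Conversely the apex together with a maximum independent set is a star: connected,
triangle-free, and of weight `n + α(G)`.
-/

open Finset in
lemma totalWeight_eq {V : Type} [Fintype V] (C : Set (Option V)) [Decidable (none ∈ C)] :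
    totalWeight C = (if none ∈ C then Fintype.card V else 0) + (some ⁻¹' C).ncard := by
  classical
  have hfilter : C.toFinite.toFinset = univ.filter (· ∈ C) := by ext; simp
  rw [totalWeight, hfilter, sum_filter, Fintype.sum_option, Set.ncard_eq_toFinset_card']
  simp [Option.elim, sum_boole]

lemma totalWeight_of_none_mem {V : Type} [Fintype V] {C : Set (Option V)} (h : none ∈ C) :
    totalWeight C = Fintype.card V + (some ⁻¹' C).ncard := by
  classical
  rw [totalWeight_eq, if_pos h]

lemma totalWeight_of_none_notMem {V : Type} [Fintype V] {C : Set (Option V)} (h : none ∉ C) :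
    totalWeight C = (some ⁻¹' C).ncard := by
  classical
  rw [totalWeight_eq, if_neg h, zero_add]

section indepNum

variable {V : Type} [Fintype V] (G : SimpleGraph V)

lemma bddAbove_indepSet_ncards :
    BddAbove {k : ℕ | ∃ A : Set V, (∀ a ∈ A, ∀ b ∈ A, ¬ G.Adj a b) ∧ A.ncard = k} :=
  ⟨Fintype.card V, by
    rintro k ⟨A, -, rfl⟩
    exact Nat.card_eq_fintype_card (α := V) ▸ Set.ncard_le_card A⟩

lemma exists_indepSet_ncard_eq_indepNum :
    ∃ A : Set V, (∀ a ∈ A, ∀ b ∈ A, ¬ G.Adj a b) ∧ A.ncard = _root_.indepNum G :=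
  show _root_.indepNum G ∈ _ from
  Nat.sSup_mem ⟨0, ∅, by simp, Set.ncard_empty V⟩ (bddAbove_indepSet_ncards G)

lemma ncard_le_indepNum {A : Set V} (hA : ∀ a ∈ A, ∀ b ∈ A, ¬ G.Adj a b) :
    A.ncard ≤ _root_.indepNum G :=
  le_csSup (bddAbove_indepSet_ncards G) ⟨A, hA, rfl⟩

end indepNum

lemma SimpleGraph.induce_connected_of_forall_adj {W : Type} {H : SimpleGraph W} {C : Set W}
    {v : W} (hv : v ∈ C) (hadj : ∀ w ∈ C, w ≠ v → H.Adj w v) : (H.induce C).Connected := by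
  have hreach : ∀ w : C, (H.induce C).Reachable w ⟨v, hv⟩ := by
    rintro ⟨w, hw⟩
    by_cases hwv : w = v
    · subst hwv; rfl
    · exact Adj.reachable (hadj w hw hwv)
  have : Nonempty C := ⟨⟨v, hv⟩⟩
  exact ⟨fun u w => (hreach u).trans (hreach w).symm⟩

lemma addVertex_triangleFree_insert_none_image {V : Type} {G : SimpleGraph V} {T : Set V}
    {A : Set V} (hA : ∀ a ∈ A, ∀ b ∈ A, ¬ G.Adj a b) :
    ∀ a ∈ insert none (some '' A), ∀ b ∈ insert none (some '' A), ∀ c ∈ insert none (some '' A),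
      ¬ ((addVertex G T).Adj a b ∧ (addVertex G T).Adj a c ∧ (addVertex G T).Adj b c) := by
  rintro a (rfl | ⟨x, hx, rfl⟩) b (rfl | ⟨y, hy, rfl⟩) c (rfl | ⟨z, hz, rfl⟩) ⟨hab, hac, hbc⟩
  all_goals first
    | exact hab | exact hac | exact hbc
    | exact hA _ ‹_› _ ‹_› hab | exact hA _ ‹_› _ ‹_› hac | exact hA _ ‹_› _ ‹_› hbc

lemma indepSet_of_addVertex_univ_triangleFree {V : Type} {G : SimpleGraph V} {C : Set (Option V)}
    (hnone : none ∈ C)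
    (htri : ∀ a ∈ C, ∀ b ∈ C, ∀ c ∈ C, ¬ ((addVertex G Set.univ).Adj a b ∧
      (addVertex G Set.univ).Adj a c ∧ (addVertex G Set.univ).Adj b c)) :
    ∀ a ∈ some ⁻¹' C, ∀ b ∈ some ⁻¹' C, ¬ G.Adj a b := fun a ha b hb hab =>
  htri none hnone (some a) ha (some b) hb ⟨Set.mem_univ a, Set.mem_univ b, hab⟩

theorem stmt15_general {V : Type} [Fintype V] (G : SimpleGraph V) :
    IsGreatest {w : ℕ | ∃ C : Set (Option V),
        ((addVertex G Set.univ).induce C).Connected ∧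
        (∀ a ∈ C, ∀ b ∈ C, ∀ c ∈ C,
          ¬ ((addVertex G Set.univ).Adj a b ∧ (addVertex G Set.univ).Adj a c ∧
             (addVertex G Set.univ).Adj b c)) ∧
        w = totalWeight C}
      (Fintype.card V + _root_.indepNum G) := by
  obtain ⟨A, hA, hAcard⟩ := exists_indepSet_ncard_eq_indepNum G
  have hpreimage : some ⁻¹' insert none (some '' A) = A := by
    ext x; simp
  refine ⟨⟨insert none (some '' A), induce_connected_of_forall_adj (Set.mem_insert _ _) ?_,
    addVertex_triangleFree_insert_none_image hA, ?_⟩, ?_⟩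
  · rintro (_ | x) - hx
    exacts [absurd rfl hx, Set.mem_univ x]
  · rw [totalWeight_of_none_mem (Set.mem_insert _ _), hpreimage, hAcard]
  · rintro w ⟨C, -, htri, rfl⟩
    by_cases hnone : none ∈ C
    · rw [totalWeight_of_none_mem hnone]
      exact Nat.add_le_add_left
        (ncard_le_indepNum G (indepSet_of_addVertex_univ_triangleFree hnone htri)) _
    · rw [totalWeight_of_none_notMem hnone]
      exact (Nat.card_eq_fintype_card (α := V) ▸ Set.ncard_le_card _).trans (Nat.le_add_right _ _)

theorem stmt15 {V : Type} [Fintype V] (hn : 1 ≤ Fintype.card V) (G : SimpleGraph V) :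
    IsGreatest {w : ℕ | ∃ C : Set (Option V),
        ((addVertex G Set.univ).induce C).Connected ∧
        (∀ a ∈ C, ∀ b ∈ C, ∀ c ∈ C,
          ¬ ((addVertex G Set.univ).Adj a b ∧ (addVertex G Set.univ).Adj a c ∧
             (addVertex G Set.univ).Adj b c)) ∧
        w = totalWeight C}
      (Fintype.card V + _root_.indepNum G) :=
  stmt15_general G
end

section
/- Let c ≥ 1 and d ≥ 1 be real numbers and let T : ℕ → ℝ≥0 satisfy T(0) ≤ 1 and, for every k ≥ 1, T(k) ≤ (d+1) · Σ_{i=1}^{k} c^i · T(k−i). Then for every k ∈ ℕ it holds that T(k) ≤ ((d+1) · 2c)^k. -/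
private lemma sum_bound (c d : ℝ) (hc : 1 ≤ c) (hd : 1 ≤ d) :
    ∀ k : ℕ, (d + 1) * ∑ i ∈ Finset.Icc 1 k, c ^ i * ((d + 1) * (2 * c)) ^ (k - i)
      + c ^ k ≤ ((d + 1) * (2 * c)) ^ k := by
  have hc0 : (0:ℝ) < c := lt_of_lt_of_le one_pos hc
  set M : ℝ := (d + 1) * (2 * c) with hM
  intro k
  induction k with
  | zero => simp
  | succ n ih =>
    have hpeel : ∑ i ∈ Finset.Icc 1 (n+1), c ^ i * M ^ (n + 1 - i)
        = M * (∑ i ∈ Finset.Icc 1 n, c ^ i * M ^ (n - i)) + c ^ (n+1) := by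
      rw [Finset.sum_Icc_succ_top (by omega), Finset.mul_sum]
      simp only [Nat.sub_self, pow_zero, mul_one]
      congr 1
      apply Finset.sum_congr rfl
      intro i hi
      simp only [Finset.mem_Icc] at hi
      have : n + 1 - i = (n - i) + 1 := by omega
      rw [this, pow_succ]
      ring
    rw [hpeel]
    have hMc : (d + 2) * c ^ (n+1) ≤ M * c ^ n := by
      rw [hM]
      have : (d+1) * (2*c) * c ^ n = (2*(d+1)) * (c * c ^ n) := by ring
      rw [this, pow_succ']
      apply mul_le_mul (by linarith) le_rfl (by positivity) (by linarith)
    have hM1 : 1 ≤ M := by nlinarith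
    calc (d + 1) * (M * ∑ i ∈ Finset.Icc 1 n, c ^ i * M ^ (n - i) + c ^ (n+1)) + c ^ (n+1)
        = M * ((d + 1) * ∑ i ∈ Finset.Icc 1 n, c ^ i * M ^ (n - i)) + (d + 2) * c ^ (n+1) := by
          ring
      _ ≤ M * (M ^ n - c ^ n) + M * c ^ n := by
          have h1 : (d + 1) * ∑ i ∈ Finset.Icc 1 n, c ^ i * M ^ (n - i) ≤ M ^ n - c ^ n := by
            linarith
          have := mul_le_mul_of_nonneg_left h1 (le_trans zero_le_one hM1)
          linarith
      _ = M ^ (n+1) := by rw [pow_succ]; ring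

theorem stmt16 (c d : ℝ) (hc : 1 ≤ c) (hd : 1 ≤ d) (T : ℕ → ℝ)
    (hnonneg : ∀ k : ℕ, 0 ≤ T k) (h0 : T 0 ≤ 1)
    (hrec : ∀ k : ℕ, 1 ≤ k →
      T k ≤ (d + 1) * ∑ i ∈ Finset.Icc 1 k, c ^ i * T (k - i)) :
    ∀ k : ℕ, T k ≤ ((d + 1) * (2 * c)) ^ k := by
  have hc0 : (0:ℝ) < c := lt_of_lt_of_le one_pos hc
  intro k
  induction k using Nat.strong_induction_on with
  | _ k ih =>
    match k with
    | 0 => simpa using h0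
    | (n+1) =>
      have h1 := hrec (n+1) (by omega)
      have h2 : ∑ i ∈ Finset.Icc 1 (n+1), c ^ i * T (n+1 - i)
          ≤ ∑ i ∈ Finset.Icc 1 (n+1), c ^ i * ((d + 1) * (2 * c)) ^ (n+1 - i) := by
        apply Finset.sum_le_sum
        intro i hi
        simp only [Finset.mem_Icc] at hi
        exact mul_le_mul_of_nonneg_left (ih (n+1-i) (by omega)) (by positivity)
      have h3 := sum_bound c d hc hd (n+1)
      have hck : 0 ≤ c ^ (n+1) := by positivity
      nlinarith [h2, mul_le_mul_of_nonneg_left h2 (by linarith : (0:ℝ) ≤ d + 1)]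
end

section
/- Let G be a finite simple graph, r ∈ V(G), T ⊆ V(G) \ {r}, and k a natural number. Then the number of vertex sets C that are seclusion-maximal with respect to the property "r ∈ C, C ∩ T = ∅, G[C] is connected, and |N_G(C)| ≤ k" is at most 4^k. -/
open SimpleGraph

/-!
This is the branching argument behind the `4 ^ k` bound for important separators. Fix a
connected root set `R` avoiding `T` and let `λ` be the least `|N(D)|` over `D ⊇ R` avoiding `T`.
Since `D ↦ |N(D)|` is submodular, minimisers are closed under union, so there is a largest one,
`S`. Uncrossing a seclusion-maximal `C` with `S` does not enlarge its neighbourhood, so by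
maximality `C` contains the component `c` of `G[S]` through `R`. If `c` has no neighbour, `c`
is the only candidate. Otherwise take a neighbour `v` of `c`. A candidate avoiding `v` has `v`
as a neighbour; removing the edges at `v` and forbidding `v` lowers the budget to `k - 1` and
`λ` by at most one. A candidate containing `v` is seclusion-maximal for the root `c ∪ {v}`,
whose `λ` is larger because `v ∉ S`. So `2k - λ` drops in both branches, and there are at most
`2 ^ (2k - λ) ≤ 4 ^ k` candidates.
-/

lemma Set.ncard_le_ncard_sdiff_singleton_add_one {α : Type*} [Finite α] (s : Set α) (a : α) :
    s.ncard ≤ (s \ {a}).ncard + 1 :=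
  calc s.ncard ≤ (insert a s).ncard := Set.ncard_le_ncard (Set.subset_insert a s)
    _ = (insert a (s \ {a})).ncard := by rw [Set.insert_sdiff_singleton]
    _ ≤ (s \ {a}).ncard + 1 := Set.ncard_insert_le a _

section Seclusion

variable {V : Type} {G : SimpleGraph V}

lemma SimpleGraph.Connected.induce_insert_of_adj {s : Set V} {u v : V}
    (hs : (G.induce s).Connected) (hu : u ∈ s) (huv : G.Adj u v) :
    (G.induce (insert v s)).Connected := by
  rw [Set.insert_eq]
  have : Nonempty ({v} : Set V) := ⟨⟨v, rfl⟩⟩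
  exact connected_induce_union Preconnected.of_subsingleton hs.preconnected rfl hu huv.symm

lemma subset_of_disjoint_openNbhd {A C : Set V} (hC : (G.induce C).Connected) (hAC : A ⊆ C)
    (hA : A.Nonempty) (hN : Disjoint (openNbhd G A) C) : C ⊆ A := by
  intro w hw
  by_contra hwA
  obtain ⟨a, ha⟩ := hA
  obtain ⟨p⟩ := hC.preconnected ⟨a, hAC ha⟩ ⟨w, hw⟩
  obtain ⟨d, -, hd₁, hd₂⟩ := p.exists_boundary_dart {x | x.1 ∈ A} ha hwA
  exact Set.disjoint_left.mp hN ⟨hd₂, _, hd₁, d.adj⟩ d.snd.2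

lemma openNbhd_union_subset (A B : Set V) :
    openNbhd G (A ∪ B) ⊆ openNbhd G A ∪ openNbhd G B := by
  rintro v ⟨hv, u, hu | hu, huv⟩
  · exact Or.inl ⟨fun h => hv (Or.inl h), u, hu, huv⟩
  · exact Or.inr ⟨fun h => hv (Or.inr h), u, hu, huv⟩

lemma openNbhd_inter_subset (A B : Set V) :
    openNbhd G (A ∩ B) ⊆ openNbhd G A ∪ openNbhd G B := by
  rintro v ⟨hv, u, hu, huv⟩
  by_cases hvA : v ∈ A
  · exact Or.inr ⟨fun h => hv ⟨hvA, h⟩, u, hu.2, huv⟩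
  · exact Or.inl ⟨hvA, u, hu.1, huv⟩

lemma openNbhd_union_inter_openNbhd_inter_subset (A B : Set V) :
    openNbhd G (A ∪ B) ∩ openNbhd G (A ∩ B) ⊆ openNbhd G A ∩ openNbhd G B := by
  rintro v ⟨⟨hv, -⟩, -, u, hu, huv⟩
  exact ⟨⟨fun h => hv (Or.inl h), u, hu.1, huv⟩, ⟨fun h => hv (Or.inr h), u, hu.2, huv⟩⟩

lemma ncard_openNbhd_union_add_ncard_openNbhd_inter_le [Finite V] (A B : Set V) :
    (openNbhd G (A ∪ B)).ncard + (openNbhd G (A ∩ B)).ncard ≤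
      (openNbhd G A).ncard + (openNbhd G B).ncard := by
  rw [← Set.ncard_union_add_ncard_inter (openNbhd G (A ∪ B)),
    ← Set.ncard_union_add_ncard_inter (openNbhd G A)]
  exact add_le_add
    (Set.ncard_le_ncard (Set.union_subset (openNbhd_union_subset A B) (openNbhd_inter_subset A B)))
    (Set.ncard_le_ncard (openNbhd_union_inter_openNbhd_inter_subset A B))

lemma openNbhd_deleteIncidenceSet {C : Set V} {v : V} (hv : v ∉ C) :
    openNbhd (G.deleteIncidenceSet v) C = openNbhd G C \ {v} := by
  ext w
  simp only [openNbhd, deleteIncidenceSet_adj, Set.mem_sdiff, Set.mem_ofPred_eq,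
    Set.mem_singleton_iff]
  constructor
  · rintro ⟨hw, u, hu, huw, -, hwv⟩
    exact ⟨⟨hw, u, hu, huw⟩, hwv⟩
  · rintro ⟨⟨hw, u, hu, huw⟩, hwv⟩
    exact ⟨hw, u, hu, huw, ne_of_mem_of_not_mem hu hv, hwv⟩

variable (G) in
/-- When `R` is connected this is the vertex set of the component of `G[S]` containing `R`. -/
def componentIn (S R : Set V) : Set V :=
  ⋃₀ {D | R ⊆ D ∧ D ⊆ S ∧ (G.induce D).Connected}

lemma subset_componentIn {S R D : Set V} (hRD : R ⊆ D) (hDS : D ⊆ S)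
    (hD : (G.induce D).Connected) : D ⊆ componentIn G S R :=
  Set.subset_sUnion_of_mem ⟨hRD, hDS, hD⟩

lemma componentIn_subset {S R : Set V} : componentIn G S R ⊆ S :=
  Set.sUnion_subset fun _ hD => hD.2.1

lemma componentIn_mono {S S' R : Set V} (h : S ⊆ S') : componentIn G S R ⊆ componentIn G S' R :=
  Set.sUnion_subset_sUnion fun _ hD => ⟨hD.1, hD.2.1.trans h, hD.2.2⟩

lemma connected_componentIn {S R : Set V} (hR : (G.induce R).Connected) (hRS : R ⊆ S) :
    (G.induce (componentIn G S R)).Connected := by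
  have hRne : R.Nonempty := Set.nonempty_coe_sort.mp hR.nonempty
  exact induce_sUnion_connected_of_pairwise_not_disjoint ⟨R, subset_rfl, hRS, hR⟩
    (fun hD hD' => hRne.mono (Set.subset_inter hD.1 hD'.1)) (fun hD => hD.2.2)

lemma openNbhd_componentIn_subset {S R : Set V} (hR : (G.induce R).Connected) (hRS : R ⊆ S) :
    openNbhd G (componentIn G S R) ⊆ openNbhd G S := by
  rintro v ⟨hv, u, hu, huv⟩
  refine ⟨fun hvS => hv ?_, u, componentIn_subset hu, huv⟩
  exact subset_componentIn ((subset_componentIn subset_rfl hRS hR).trans (Set.subset_insert _ _))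
    (Set.insert_subset hvS componentIn_subset) ((connected_componentIn hR hRS).induce_insert_of_adj
      hu huv) (Set.mem_insert v _)

variable (G) in
/-- Junk value `0` when `R` meets `T`: the infimum is then taken over the empty set. -/
noncomputable def minNbhdCard (T R : Set V) : ℕ :=
  sInf ((fun D => (openNbhd G D).ncard) '' {D | R ⊆ D ∧ Disjoint D T})

variable (G) in
def IsMinNbhd (T R D : Set V) : Prop :=
  R ⊆ D ∧ Disjoint D T ∧ (openNbhd G D).ncard = minNbhdCard G T R

lemma minNbhdCard_le {T R D : Set V} (hRD : R ⊆ D) (hDT : Disjoint D T) :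
    minNbhdCard G T R ≤ (openNbhd G D).ncard :=
  Nat.sInf_le ⟨D, ⟨hRD, hDT⟩, rfl⟩

lemma exists_isMinNbhd {T R : Set V} (hRT : Disjoint R T) : ∃ D, IsMinNbhd G T R D := by
  obtain ⟨D, ⟨hRD, hDT⟩, hD⟩ := Nat.sInf_mem (s := (fun D => (openNbhd G D).ncard) ''
    {D | R ⊆ D ∧ Disjoint D T}) (Set.image_nonempty.2 ⟨R, subset_rfl, hRT⟩)
  exact ⟨D, hRD, hDT, hD⟩

lemma IsMinNbhd.union [Finite V] {T R A B : Set V} (hA : IsMinNbhd G T R A)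
    (hB : IsMinNbhd G T R B) : IsMinNbhd G T R (A ∪ B) := by
  have hAB := ncard_openNbhd_union_add_ncard_openNbhd_inter_le (G := G) A B
  have hunion := minNbhdCard_le (G := G) (hA.1.trans Set.subset_union_left)
    (Disjoint.union_left hA.2.1 hB.2.1)
  have hinter := minNbhdCard_le (G := G) (Set.subset_inter hA.1 hB.1)
    (hA.2.1.mono_left Set.inter_subset_left)
  exact ⟨hA.1.trans Set.subset_union_left, Disjoint.union_left hA.2.1 hB.2.1,
    by linarith [hA.2.2, hB.2.2]⟩

lemma exists_isMinNbhd_forall_subset [Finite V] {T R : Set V} (hRT : Disjoint R T) :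
    ∃ S, IsMinNbhd G T R S ∧ ∀ D, IsMinNbhd G T R D → D ⊆ S := by
  obtain ⟨S, hS, hmax⟩ := Set.exists_max_image {D | IsMinNbhd G T R D} Set.ncard
    (Set.toFinite _) (exists_isMinNbhd hRT)
  refine ⟨S, hS, fun D hD => ?_⟩
  rw [Set.eq_of_subset_of_ncard_le Set.subset_union_right (hmax _ (hD.union hS))]
  exact Set.subset_union_left

lemma ncard_openNbhd_union_le [Finite V] {T R S C : Set V} (hS : IsMinNbhd G T R S)
    (hRC : R ⊆ C) (hCT : Disjoint C T) :
    (openNbhd G (C ∪ S)).ncard ≤ (openNbhd G C).ncard := by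
  have := ncard_openNbhd_union_add_ncard_openNbhd_inter_le (G := G) C S
  have := minNbhdCard_le (G := G) (Set.subset_inter hRC hS.1) (hCT.mono_left Set.inter_subset_left)
  linarith [hS.2.2]

variable (G) in
def Secluded (T R : Set V) (k : ℕ) (C : Set V) : Prop :=
  R ⊆ C ∧ Disjoint C T ∧ (G.induce C).Connected ∧ (openNbhd G C).ncard ≤ k

variable (G) in
def seclusionMaximalSets (T R : Set V) (k : ℕ) : Set (Set V) :=
  {C | SeclusionMaximal G (Secluded G T R k) C}

lemma seclusionMaximalSets_eq_empty_of_lt {T R : Set V} {k : ℕ} (hk : k < minNbhdCard G T R) :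
    seclusionMaximalSets G T R k = ∅ :=
  Set.eq_empty_of_forall_notMem fun _ ⟨⟨hRC, hCT, _, hCk⟩, _⟩ =>
    (minNbhdCard_le hRC hCT).not_gt (hCk.trans_lt hk)

lemma seclusionMaximalSets_eq_empty_of_not_disjoint {T R : Set V} {k : ℕ}
    (hRT : ¬Disjoint R T) : seclusionMaximalSets G T R k = ∅ :=
  Set.eq_empty_of_forall_notMem fun _ ⟨⟨hRC, hCT, _⟩, _⟩ => hRT (hCT.mono_left hRC)

lemma seclusionMaximalSets_mono_left {T R R' C : Set V} {k : ℕ}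
    (hC : C ∈ seclusionMaximalSets G T R k) (hRR' : R ⊆ R') (hR'C : R' ⊆ C) :
    C ∈ seclusionMaximalSets G T R' k :=
  ⟨⟨hR'C, hC.1.2⟩, fun C' hCC' hC' => hC.2 C' hCC' ⟨hRR'.trans hC'.1, hC'.2⟩⟩

lemma mem_seclusionMaximalSets_deleteIncidenceSet [Finite V] {T R C : Set V} {k : ℕ} {v : V}
    (hC : C ∈ seclusionMaximalSets G T R k) (hv : v ∈ openNbhd G C) :
    C ∈ seclusionMaximalSets (G.deleteIncidenceSet v) (insert v T) R (k - 1) := by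
  obtain ⟨⟨hRC, hCT, hCconn, hCk⟩, hmax⟩ := hC
  have hNC : (openNbhd (G.deleteIncidenceSet v) C).ncard + 1 = (openNbhd G C).ncard := by
    rw [openNbhd_deleteIncidenceSet hv.1, Set.ncard_sdiff_singleton_add_one hv]
  refine ⟨⟨hRC, Set.disjoint_insert_right.2 ⟨hv.1, hCT⟩,
    by rwa [induce_deleteIncidenceSet_of_notMem _ hv.1], by omega⟩, fun C' hCC' hC' => ?_⟩
  obtain ⟨hRC', hC'T, hC'conn, hC'k⟩ := hC'
  obtain ⟨hvC', hC'T⟩ := Set.disjoint_insert_right.1 hC'T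
  have hNC' : (openNbhd G C').ncard ≤ (openNbhd (G.deleteIncidenceSet v) C').ncard + 1 := by
    rw [openNbhd_deleteIncidenceSet hvC']
    exact Set.ncard_le_ncard_sdiff_singleton_add_one _ v
  have := hmax C' hCC' ⟨hRC', hC'T,
    by rwa [induce_deleteIncidenceSet_of_notMem _ hvC'] at hC'conn, by omega⟩
  omega

lemma minNbhdCard_le_minNbhdCard_deleteIncidenceSet_add_one [Finite V] {T R : Set V} {v : V}
    (hRT : Disjoint R (insert v T)) :
    minNbhdCard G T R ≤ minNbhdCard (G.deleteIncidenceSet v) (insert v T) R + 1 := by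
  obtain ⟨D, hRD, hDT, hD⟩ := exists_isMinNbhd (G := G.deleteIncidenceSet v) hRT
  obtain ⟨hvD, hDT⟩ := Set.disjoint_insert_right.1 hDT
  calc minNbhdCard G T R ≤ (openNbhd G D).ncard := minNbhdCard_le hRD hDT
    _ ≤ (openNbhd (G.deleteIncidenceSet v) D).ncard + 1 := by
      rw [openNbhd_deleteIncidenceSet hvD]
      exact Set.ncard_le_ncard_sdiff_singleton_add_one _ v
    _ = _ := by rw [hD]

lemma minNbhdCard_lt_of_notMem_of_forall_subset {T R R' S : Set V} {v : V}
    (hmax : ∀ D, IsMinNbhd G T R D → D ⊆ S) (hRR' : R ⊆ R') (hvR' : v ∈ R') (hvS : v ∉ S)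
    (hR'T : Disjoint R' T) : minNbhdCard G T R < minNbhdCard G T R' := by
  obtain ⟨D, hR'D, hDT, hD⟩ := exists_isMinNbhd (G := G) hR'T
  exact lt_of_le_of_ne (hD ▸ minNbhdCard_le (hRR'.trans hR'D) hDT) fun h =>
    hvS (hmax D ⟨hRR'.trans hR'D, hDT, hD.trans h.symm⟩ (hR'D hvR'))

lemma componentIn_subset_of_mem_seclusionMaximalSets [Finite V] {T R S C : Set V} {k : ℕ}
    (hR : (G.induce R).Connected) (hS : IsMinNbhd G T R S)
    (hC : C ∈ seclusionMaximalSets G T R k) : componentIn G S R ⊆ C := by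
  obtain ⟨⟨hRC, hCT, hCconn, hCk⟩, hmax⟩ := hC
  have hRCS : R ⊆ C ∪ S := hRC.trans Set.subset_union_left
  have hCD : C ⊆ componentIn G (C ∪ S) R := subset_componentIn hRC Set.subset_union_left hCconn
  have hND : (openNbhd G (componentIn G (C ∪ S) R)).ncard ≤ (openNbhd G C).ncard :=
    (Set.ncard_le_ncard (openNbhd_componentIn_subset hR hRCS)).trans
      (ncard_openNbhd_union_le hS hRC hCT)
  have hDC : componentIn G (C ∪ S) R = C := by
    by_contra hne
    have := hmax _ (hCD.ssubset_of_ne (Ne.symm hne)) ⟨hRC.trans hCD,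
      (Set.disjoint_union_left.2 ⟨hCT, hS.2.1⟩).mono_left componentIn_subset,
      connected_componentIn hR hRCS, hND.trans hCk⟩
    omega
  exact hDC ▸ componentIn_mono Set.subset_union_right

lemma seclusionMaximalSets_subset_singleton {T R c : Set V} {k : ℕ} (hR : R.Nonempty)
    (hRc : R ⊆ c) (hcC : ∀ C ∈ seclusionMaximalSets G T R k, c ⊆ C) (hc : openNbhd G c = ∅) :
    seclusionMaximalSets G T R k ⊆ {c} := fun C hC =>
  (subset_of_disjoint_openNbhd hC.1.2.2.1 (hcC C hC) (hR.mono hRc) (by simp [hc])).antisymm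
    (hcC C hC)

lemma seclusionMaximalSets_subset_union [Finite V] {T R c : Set V} {k : ℕ} {v : V}
    (hRc : R ⊆ c) (hcC : ∀ C ∈ seclusionMaximalSets G T R k, c ⊆ C) (hv : v ∈ openNbhd G c) :
    seclusionMaximalSets G T R k ⊆
      seclusionMaximalSets (G.deleteIncidenceSet v) (insert v T) R (k - 1) ∪
        seclusionMaximalSets G T (insert v c) k := by
  intro C hC
  by_cases hvC : v ∈ C
  · exact Or.inr (seclusionMaximalSets_mono_left hC (hRc.trans (Set.subset_insert v c))
      (Set.insert_subset hvC (hcC C hC)))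
  · obtain ⟨-, u, hu, huv⟩ := hv
    exact Or.inl (mem_seclusionMaximalSets_deleteIncidenceSet hC ⟨hvC, u, hcC C hC hu, huv⟩)

variable (G) in
theorem ncard_seclusionMaximalSets_le [Finite V] (T R : Set V) (k : ℕ)
    (hR : (G.induce R).Connected) (hRT : Disjoint R T) :
    (seclusionMaximalSets G T R k).ncard ≤ 2 ^ (2 * k - minNbhdCard G T R) := by
  induction hn : 2 * k - minNbhdCard G T R using Nat.strong_induction_on generalizing G T R k with
  | _ n ih =>
  rcases lt_or_ge k (minNbhdCard G T R) with hk | hk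
  · simp [seclusionMaximalSets_eq_empty_of_lt hk]
  obtain ⟨S, hS, hSmax⟩ := exists_isMinNbhd_forall_subset (G := G) hRT
  have hRc : R ⊆ componentIn G S R := subset_componentIn subset_rfl hS.1 hR
  have hcC : ∀ C ∈ seclusionMaximalSets G T R k, componentIn G S R ⊆ C := fun C hC =>
    componentIn_subset_of_mem_seclusionMaximalSets hR hS hC
  have hcS : openNbhd G (componentIn G S R) ⊆ openNbhd G S := openNbhd_componentIn_subset hR hS.1
  have hcconn := connected_componentIn hR hS.1
  have hcT : Disjoint (componentIn G S R) T := hS.2.1.mono_left componentIn_subset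
  generalize componentIn G S R = c at *
  rcases (openNbhd G c).eq_empty_or_nonempty with hc | ⟨v, hv⟩
  · calc (seclusionMaximalSets G T R k).ncard ≤ ({c} : Set (Set V)).ncard :=
          Set.ncard_le_ncard (seclusionMaximalSets_subset_singleton
            (Set.nonempty_coe_sort.mp hR.nonempty) hRc hcC hc)
      _ ≤ 2 ^ n := by simpa using Nat.one_le_two_pow
  have hvS : v ∉ S := (hcS hv).1
  have hmin : 1 ≤ minNbhdCard G T R := by
    rw [← hS.2.2]
    exact ((Set.ncard_pos (Set.toFinite _)).2 ⟨v, hv⟩).trans_le (Set.ncard_le_ncard hcS)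
  have hdelete : (seclusionMaximalSets (G.deleteIncidenceSet v) (insert v T) R (k - 1)).ncard ≤
      2 ^ (n - 1) := by
    have hvR : v ∉ R := fun hvR => hv.1 (hRc hvR)
    have hRT' : Disjoint R (insert v T) := Set.disjoint_insert_right.2 ⟨hvR, hRT⟩
    have := minNbhdCard_le_minNbhdCard_deleteIncidenceSet_add_one (G := G) hRT'
    exact (ih _ (by omega) _ _ _ _ (by rwa [induce_deleteIncidenceSet_of_notMem _ hvR]) hRT'
      rfl).trans (Nat.pow_le_pow_right two_pos (by omega))
  have hextend : (seclusionMaximalSets G T (insert v c) k).ncard ≤ 2 ^ (n - 1) := by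
    by_cases hvT : v ∈ T
    · simp [seclusionMaximalSets_eq_empty_of_not_disjoint (G := G) (k := k)
        (Set.not_disjoint_iff.2 ⟨v, Set.mem_insert v c, hvT⟩)]
    have hvcT : Disjoint (insert v c) T := Set.disjoint_insert_left.2 ⟨hvT, hcT⟩
    have := minNbhdCard_lt_of_notMem_of_forall_subset hSmax (hRc.trans (Set.subset_insert v c))
      (Set.mem_insert v c) hvS hvcT
    obtain ⟨u, hu, huv⟩ := hv.2
    exact (ih _ (by omega) _ _ _ _ (hcconn.induce_insert_of_adj hu huv) hvcT rfl).trans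
      (Nat.pow_le_pow_right two_pos (by omega))
  calc (seclusionMaximalSets G T R k).ncard
      ≤ (seclusionMaximalSets (G.deleteIncidenceSet v) (insert v T) R (k - 1)).ncard +
        (seclusionMaximalSets G T (insert v c) k).ncard :=
        (Set.ncard_le_ncard (seclusionMaximalSets_subset_union hRc hcC hv)).trans
          (Set.ncard_union_le _ _)
    _ ≤ 2 ^ (n - 1) + 2 ^ (n - 1) := add_le_add hdelete hextend
    _ = 2 ^ n := by rw [← two_mul, ← pow_succ', Nat.sub_add_cancel (by omega)]

end Seclusion

/-- The bound on the number of important separators, phrased via secluded subgraphs. -/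
theorem stmt18 {V : Type} [Fintype V] (G : SimpleGraph V) (r : V) (T : Set V)
    (hT : r ∉ T) (k : ℕ) :
    {C : Set V | SeclusionMaximal G (fun C =>
        r ∈ C ∧ C ∩ T = ∅ ∧
        (G.induce C).Connected ∧
        (openNbhd G C).ncard ≤ k) C}.ncard ≤ 4 ^ k := by
  have hsecluded : (fun C => r ∈ C ∧ C ∩ T = ∅ ∧ (G.induce C).Connected ∧
      (openNbhd G C).ncard ≤ k) = Secluded G T {r} k := by
    funext C
    simp only [Secluded, Set.singleton_subset_iff, Set.disjoint_iff_inter_eq_empty]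
  have hr : (G.induce {r}).Connected := Connected.of_subsingleton
  calc _ = (seclusionMaximalSets G T {r} k).ncard := by rw [hsecluded]; rfl
    _ ≤ 2 ^ (2 * k - minNbhdCard G T {r}) :=
      ncard_seclusionMaximalSets_le G T {r} k hr (Set.disjoint_singleton_left.2 hT)
    _ ≤ 2 ^ (2 * k) := Nat.pow_le_pow_right two_pos (Nat.sub_le _ _)
    _ = 4 ^ k := by rw [pow_mul]; norm_num
end
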